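/- arXiv:1709.03358 — 9 statements merged into one kernel-verified Lean document; each statement's English description precedes it below -/
import Mathlib

section
/- Let p > 3 be prime and let E be the Montgomery curve By² = x(x² + Ax + 1) over F_p with A² ≠ 4 and B ≠ 0. For points P, Q, R on E, write ±P = (X^P : Z^P) for the image of P on the x-line P¹ (where (X : Y : Z) maps to (X : Z) if Z ≠ 0 and to (1 : 0) if Z = 0). Define B_XX = (X^P X^Q − Z^P Z^Q)², B_XZ = (X^P X^Q + Z^P Z^Q)(X^P Z^Q + Z^P X^Q) + 2A X^P Z^P X^Q Z^Q, and B_ZZ = (X^P Z^Q − Z^P X^Q)². Then ±R ∈ {±(P+Q), ±(P−Q)} if and only if B_ZZ (X^R)² − 2 B_XZ X^R Z^R + B_XX (Z^R)² = 0. -/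
/-- The `x`-only quotient map `E → P¹` for a point on the Montgomery curve
`By² = x(x² + Ax + 1)` given via its scaled Weierstrass model
`v² = u³ + (A/B)u² + (1/B²)u` (so `x_Montgomery = B·u`): `(X : Y : Z) ↦ (X : Z)` if
`Z ≠ 0` and `(1 : 0)` otherwise, with canonical representatives. -/
def montXLine {F : Type*} [Field F] (B : F) {W : WeierstrassCurve.Affine F} :
    W.Point → F × F
  | .zero => (1, 0)
  | .some (x := x) _ _ => (B * x, 1)

/-!
Up to a nonzero scalar, the binary quadratic form `B_ZZ X² − 2 B_XZ X Z + B_XX Z²` is the product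
of the two linear forms on `P¹` vanishing at `±(P + Q)` and at `±(P − Q)`.

If `P` (or `Q`) is the origin, the form is the square of the linear form of the other point.
For affine `P`, `Q` with distinct Montgomery coordinates `u₁ ≠ u₂` this is Vieta: the chord
formulas give `x(P + Q) + x(P − Q) = 2 B_XZ / B_ZZ` and `x(P + Q) · x(P − Q) = B_XX / B_ZZ`,
the latter because `(B v₁ v₂)² = f(u₁) f(u₂)` with `f(u) = u(u² + Au + 1)`.
If `u₁ = u₂` then `Q = ±P` and `B_ZZ = 0`: the form is `Z` times a linear form, whose root is
`x(2P) = (u² − 1)² / (4u(u² + Au + 1))`; at a point of order two it degenerates to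
`(u² − 1)² Z²`, which is nonzero because `A² ≠ 4`.
-/

namespace Montgomery

open WeierstrassCurve.Affine WeierstrassCurve.Affine.Point

variable {F : Type*} [Field F]

/-- The Weierstrass model of `B y² = x (x² + A x + 1)` in the coordinates `(x / B, y / B)`. -/
def curve (A B : F) : WeierstrassCurve.Affine F :=
  { a₁ := 0, a₂ := A / B, a₃ := 0, a₄ := 1 / B ^ 2, a₆ := 0 }

def cross (S T : F × F) : F :=
  S.2 * T.1 - S.1 * T.2

/-- `B_ZZ X² − 2 B_XZ X Z + B_XX Z²` for `S = (X^P, Z^P)`, `T = (X^Q, Z^Q)`, `R = (X, Z)`. -/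
def biquadratic (A : F) (S T R : F × F) : F :=
  (S.1 * T.2 - S.2 * T.1) ^ 2 * R.1 ^ 2
    - 2 * ((S.1 * T.1 + S.2 * T.2) * (S.1 * T.2 + S.2 * T.1) + 2 * A * S.1 * S.2 * T.1 * T.2)
      * R.1 * R.2
    + (S.1 * T.1 - S.2 * T.2) ^ 2 * R.2 ^ 2

variable {A B : F}

lemma biquadratic_one_zero_left (T R : F × F) :
    biquadratic A (1, 0) T R = cross T R ^ 2 := by
  simp only [biquadratic, cross]; ring

lemma biquadratic_one_zero_right (S R : F × F) :
    biquadratic A S (1, 0) R = cross S R ^ 2 := by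
  simp only [biquadratic, cross]; ring

/-- `s` and `t` are the `x`-coordinates of `P + Q` and `P − Q`, from the chord slopes
`(v₁ ∓ v₂) / (u₁ − u₂)`. -/
lemma biquadratic_eq_of_X_ne {u₁ u₂ v₁ v₂ s t : F} (hu : u₁ ≠ u₂)
    (h₁ : B * v₁ ^ 2 = u₁ ^ 3 + A * u₁ ^ 2 + u₁) (h₂ : B * v₂ ^ 2 = u₂ ^ 3 + A * u₂ ^ 2 + u₂)
    (hs : (u₁ - u₂) ^ 2 * s = B * (v₁ - v₂) ^ 2 - (A + u₁ + u₂) * (u₁ - u₂) ^ 2)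
    (ht : (u₁ - u₂) ^ 2 * t = B * (v₁ + v₂) ^ 2 - (A + u₁ + u₂) * (u₁ - u₂) ^ 2)
    (R : F × F) :
    biquadratic A (u₁, 1) (u₂, 1) R = (u₁ - u₂) ^ 2 * (cross (s, 1) R * cross (t, 1) R) := by
  have hd : (u₁ - u₂) ^ 2 ≠ 0 := pow_ne_zero 2 (sub_ne_zero.mpr hu)
  have hsum : (u₁ - u₂) ^ 2 * (s + t) =
      2 * ((u₁ * u₂ + 1) * (u₁ + u₂) + 2 * A * u₁ * u₂) := by
    linear_combination hs + ht + 2 * h₁ + 2 * h₂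
  have hprod : (u₁ - u₂) ^ 2 * (s * t) = (u₁ * u₂ - 1) ^ 2 := by
    have hst : ((u₁ - u₂) ^ 2 * s) * ((u₁ - u₂) ^ 2 * t) =
        (B * v₁ ^ 2 + B * v₂ ^ 2 - (A + u₁ + u₂) * (u₁ - u₂) ^ 2) ^ 2
          - 4 * (B * v₁ ^ 2) * (B * v₂ ^ 2) := by
      rw [hs, ht]; ring
    rw [h₁, h₂] at hst
    exact mul_left_cancel₀ hd (by linear_combination hst)
  simp only [biquadratic, cross]
  linear_combination (R.1 * R.2) * hsum - R.2 ^ 2 * hprod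

lemma biquadratic_self_eq {u s : F} (hs : 4 * (u ^ 3 + A * u ^ 2 + u) * s = (u ^ 2 - 1) ^ 2)
    (R : F × F) :
    biquadratic A (u, 1) (u, 1) R =
      4 * (u ^ 3 + A * u ^ 2 + u) * (cross (s, 1) R * cross (1, 0) R) := by
  simp only [biquadratic, cross]
  linear_combination (-R.2 ^ 2) * hs

lemma biquadratic_self_eq_of_two_torsion {u : F} (hu : u ^ 3 + A * u ^ 2 + u = 0) (R : F × F) :
    biquadratic A (u, 1) (u, 1) R = (u ^ 2 - 1) ^ 2 * (cross (1, 0) R * cross (1, 0) R) := by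
  simp only [biquadratic, cross]
  linear_combination (-4 * R.1 * R.2) * hu

lemma sq_sub_one_ne_zero_of_cubic_eq_zero (hA : A ^ 2 ≠ 4) {u : F}
    (hu : u ^ 3 + A * u ^ 2 + u = 0) : u ^ 2 - 1 ≠ 0 := by
  intro h
  exact hA (by linear_combination (A - 2 * u) * hu + (4 - (A - 2 * u) * (u + A)) * h)

lemma montXLine_neg {W : WeierstrassCurve.Affine F} (T : W.Point) :
    montXLine B (-T) = montXLine B T := by
  rcases T with _ | _ <;> rfl

lemma montXLine_eq_iff_cross_eq_zero {W : WeierstrassCurve.Affine F} (T R : W.Point) :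
    montXLine B R = montXLine B T ↔ cross (montXLine B T) (montXLine B R) = 0 := by
  rcases T with _ | ⟨xT, yT, _⟩ <;> rcases R with _ | ⟨xR, yR, _⟩ <;>
    simp [montXLine, cross, sub_eq_zero, eq_comm]

@[simp]
lemma curve_negY (x y : F) : (curve A B).negY x y = -y := by
  simp [curve, negY]

lemma curve_equation (hB : B ≠ 0) {x y : F} (h : (curve A B).Equation x y) :
    B * (B * y) ^ 2 = (B * x) ^ 3 + A * (B * x) ^ 2 + B * x := by
  rw [equation_iff] at h
  simp only [curve] at h
  field_simp at h
  linear_combination B * h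

lemma curve_Y_ne_negY (h2 : (2 : F) ≠ 0) {x y : F} (hy : y ≠ 0) : y ≠ (curve A B).negY x y := by
  rw [curve_negY]
  intro h
  exact hy ((mul_eq_zero.mp (by linear_combination h : (2 : F) * y = 0)).resolve_left h2)

variable [DecidableEq F]

lemma curve_addX_of_X_ne (hB : B ≠ 0) {x₁ x₂ y₁ y₂ : F} (hx : x₁ ≠ x₂) :
    (B * x₁ - B * x₂) ^ 2 * (B * (curve A B).addX x₁ x₂ ((curve A B).slope x₁ x₂ y₁ y₂)) =
      B * (B * y₁ - B * y₂) ^ 2 - (A + B * x₁ + B * x₂) * (B * x₁ - B * x₂) ^ 2 := by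
  have hd : x₁ - x₂ ≠ 0 := sub_ne_zero.mpr hx
  rw [slope_of_X_ne hx, addX]
  simp only [curve]
  field_simp
  ring

lemma curve_addX_self (hB : B ≠ 0) (h2 : (2 : F) ≠ 0) {x y : F} (h : (curve A B).Equation x y)
    (hy : y ≠ 0) :
    4 * ((B * x) ^ 3 + A * (B * x) ^ 2 + B * x) *
        (B * (curve A B).addX x x ((curve A B).slope x x y y)) =
      ((B * x) ^ 2 - 1) ^ 2 := by
  have hE := curve_equation hB h
  rw [← hE, slope_of_Y_ne rfl (curve_Y_ne_negY h2 hy), addX, curve_negY]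
  simp only [curve, zero_mul, sub_zero, sub_neg_eq_add, ← two_mul]
  field_simp
  linear_combination (-16 * (A + 2 * B * x)) * hE

lemma exists_biquadratic_self_eq (h2 : (2 : F) ≠ 0) (hA : A ^ 2 ≠ 4) (hB : B ≠ 0)
    (P : (curve A B).Point) :
    ∃ c ≠ 0, ∀ R : F × F, biquadratic A (montXLine B P) (montXLine B P) R =
      c * (cross (montXLine B (P + P)) R * cross (montXLine B (P - P)) R) := by
  rw [sub_self]
  rcases P with _ | ⟨x, y, h⟩
  · refine ⟨1, one_ne_zero, fun R => ?_⟩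
    rw [← zero_def, zero_add]
    exact (biquadratic_one_zero_left _ R).trans (by ring)
  have hE := curve_equation hB h.1
  by_cases hy : y = 0
  · subst hy
    have hf : (B * x) ^ 3 + A * (B * x) ^ 2 + B * x = 0 := by simpa using hE.symm
    rw [add_self_of_Y_eq (by simp [curve])]
    exact ⟨_, pow_ne_zero 2 (sq_sub_one_ne_zero_of_cubic_eq_zero hA hf),
      biquadratic_self_eq_of_two_torsion hf⟩
  · rw [add_self_of_Y_ne (curve_Y_ne_negY h2 hy)]
    refine ⟨_, ?_, biquadratic_self_eq (curve_addX_self hB h2 h.1 hy)⟩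
    rw [← hE]
    have h4 : (4 : F) ≠ 0 := by rw [show (4 : F) = 2 * 2 by norm_num]; exact mul_ne_zero h2 h2
    exact mul_ne_zero h4 (mul_ne_zero hB (pow_ne_zero 2 (mul_ne_zero hB hy)))

lemma exists_biquadratic_eq_of_X_ne (hB : B ≠ 0) {x₁ x₂ y₁ y₂ : F}
    (h₁ : (curve A B).Nonsingular x₁ y₁) (h₂ : (curve A B).Nonsingular x₂ y₂) (hx : x₁ ≠ x₂) :
    ∃ c ≠ 0, ∀ R : F × F, biquadratic A (B * x₁, 1) (B * x₂, 1) R =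
      c * (cross (montXLine B (Point.some _ _ h₁ + Point.some _ _ h₂)) R *
        cross (montXLine B (Point.some _ _ h₁ - Point.some _ _ h₂)) R) := by
  have hBx : B * x₁ ≠ B * x₂ := (mul_right_injective₀ hB).ne hx
  rw [sub_eq_add_neg, neg_some, add_of_X_ne hx, add_of_X_ne hx]
  refine ⟨_, pow_ne_zero 2 (sub_ne_zero.mpr hBx), biquadratic_eq_of_X_ne hBx
    (curve_equation hB h₁.1) (curve_equation hB h₂.1) (curve_addX_of_X_ne hB hx) ?_⟩
  rw [curve_negY]
  linear_combination curve_addX_of_X_ne (A := A) hB hx (y₁ := y₁) (y₂ := -y₂)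

theorem exists_biquadratic_eq_mul_cross (h2 : (2 : F) ≠ 0) (hA : A ^ 2 ≠ 4) (hB : B ≠ 0)
    (P Q : (curve A B).Point) :
    ∃ c ≠ 0, ∀ R : F × F, biquadratic A (montXLine B P) (montXLine B Q) R =
      c * (cross (montXLine B (P + Q)) R * cross (montXLine B (P - Q)) R) := by
  rcases P with _ | ⟨x₁, y₁, h₁⟩
  · refine ⟨1, one_ne_zero, fun R => ?_⟩
    rw [← zero_def, zero_add, zero_sub, montXLine_neg]
    exact (biquadratic_one_zero_left _ R).trans (by ring)
  rcases Q with _ | ⟨x₂, y₂, h₂⟩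
  · refine ⟨1, one_ne_zero, fun R => ?_⟩
    rw [← zero_def, add_zero, sub_zero]
    exact (biquadratic_one_zero_right _ R).trans (by ring)
  by_cases hx : x₁ = x₂
  · subst hx
    rcases Y_eq_of_X_eq h₁.1 h₂.1 rfl with rfl | rfl
    · exact exists_biquadratic_self_eq h2 hA hB (some _ _ h₁)
    · obtain ⟨c, hc, hQ⟩ := exists_biquadratic_self_eq h2 hA hB (some _ _ h₂)
      refine ⟨c, hc, fun R => ?_⟩
      have hP : some _ _ h₁ = -some _ _ h₂ := rfl
      rw [hP, montXLine_neg, neg_add_cancel, ← neg_add', montXLine_neg, hQ, sub_self,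
        mul_comm (cross _ R)]
  · exact exists_biquadratic_eq_of_X_ne hB h₁ h₂ hx

end Montgomery

/-- `±R ∈ {±(P+Q), ±(P−Q)}` iff
`B_ZZ (X^R)² − 2 B_XZ X^R Z^R + B_XX (Z^R)² = 0`. -/
theorem montgomery_check_correct {p : ℕ} [Fact p.Prime] (hp : 3 < p)
    (A B : ZMod p) (hA : A ^ 2 ≠ 4) (hB : B ≠ 0)
    (W : WeierstrassCurve.Affine (ZMod p))
    (hW : W = { a₁ := 0, a₂ := A / B, a₃ := 0, a₄ := 1 / B ^ 2, a₆ := 0 })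
    (P Q R : W.Point)
    (XP ZP XQ ZQ XR ZR BXX BXZ BZZ : ZMod p)
    (hP : (XP, ZP) = montXLine B P) (hQ : (XQ, ZQ) = montXLine B Q)
    (hR : (XR, ZR) = montXLine B R)
    (hBXX : BXX = (XP * XQ - ZP * ZQ) ^ 2)
    (hBXZ : BXZ = (XP * XQ + ZP * ZQ) * (XP * ZQ + ZP * XQ) + 2 * A * XP * ZP * XQ * ZQ)
    (hBZZ : BZZ = (XP * ZQ - ZP * XQ) ^ 2) :
    (montXLine B R = montXLine B (P + Q) ∨ montXLine B R = montXLine B (P - Q)) ↔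
      BZZ * XR ^ 2 - 2 * BXZ * XR * ZR + BXX * ZR ^ 2 = 0 := by
  obtain rfl : W = Montgomery.curve A B := hW
  subst hBXX hBXZ hBZZ
  have h2 : (2 : ZMod p) ≠ 0 := Ring.two_ne_zero (by rw [ZMod.ringChar_zmod_n]; omega)
  obtain ⟨c, hc, hfactor⟩ := Montgomery.exists_biquadratic_eq_mul_cross h2 hA hB P Q
  change _ ↔ Montgomery.biquadratic A (XP, ZP) (XQ, ZQ) (XR, ZR) = 0
  rw [hP, hQ, hR, hfactor, mul_eq_zero_iff_left hc, mul_eq_zero,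
    Montgomery.montXLine_eq_iff_cross_eq_zero, Montgomery.montXLine_eq_iff_cross_eq_zero]
end

section
/- Let E be the Montgomery curve By² = x(x² + Ax + 1) over F_p. For points P, Q on E with S = P + Q and D = P − Q, the projective identity (X^S X^D : X^S Z^D + Z^S X^D : Z^S Z^D) = (B_XX : 2 B_XZ : B_ZZ) holds, where B_XX = (X^P X^Q − Z^P Z^Q)², B_XZ = (X^P X^Q + Z^P Z^Q)(X^P Z^Q + Z^P X^Q) + 2A X^P Z^P X^Q Z^Q, and B_ZZ = (X^P Z^Q − Z^P X^Q)², including the degenerate cases ±P = ±Q, ±P = ±0, and ±Q = ±0. -/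
open WeierstrassCurve.Affine

section

variable {F : Type*} [Field F]

-- `(S.1 D.1 : S.1 D.2 + S.2 D.1 : S.2 D.2) = (B_XX : 2 B_XZ : B_ZZ)` in `ℙ²`.
def BiquadraticRel (A : F) (P Q S D : F × F) : Prop :=
  ∃ c : F, c ≠ 0 ∧
    S.1 * D.1 = c * (P.1 * Q.1 - P.2 * Q.2) ^ 2 ∧
    S.1 * D.2 + S.2 * D.1 =
      c * (2 * ((P.1 * Q.1 + P.2 * Q.2) * (P.1 * Q.2 + P.2 * Q.1) +
        2 * A * P.1 * P.2 * Q.1 * Q.2)) ∧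
    S.2 * D.2 = c * (P.1 * Q.2 - P.2 * Q.1) ^ 2

-- Montgomery version of `WeierstrassCurve.Affine.addX`: the `X`-coordinate of `P₁ + P₂` when
-- the line through `P₁` and `P₂` has slope `ℓ`.
def montgomeryAddX (A B X₁ X₂ ℓ : F) : F := B * ℓ ^ 2 - A - X₁ - X₂

-- The Weierstrass model of `B Y² = X (X² + A X + 1)` in the coordinates `x = X / B`, `y = Y / B`.
def montgomeryCurve (A B : F) : WeierstrassCurve.Affine F :=
  { a₁ := 0, a₂ := A / B, a₃ := 0, a₄ := 1 / B ^ 2, a₆ := 0 }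

variable {A B : F}

lemma BiquadraticRel.symm {P Q S D : F × F} (h : BiquadraticRel A P Q S D) :
    BiquadraticRel A P Q D S := by
  obtain ⟨c, hc, hXX, hXZ, hZZ⟩ := h
  exact ⟨c, hc, by linear_combination hXX, by linear_combination hXZ, by linear_combination hZZ⟩

lemma biquadraticRel_zero_left (Q : F × F) : BiquadraticRel A (1, 0) Q Q Q :=
  ⟨1, one_ne_zero, by ring, by ring, by ring⟩

lemma biquadraticRel_zero_right (P : F × F) : BiquadraticRel A P (1, 0) P P :=
  ⟨1, one_ne_zero, by ring, by ring, by ring⟩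

lemma biquadraticRel_of_X_ne {X₁ Y₁ X₂ Y₂ : F}
    (h₁ : B * Y₁ ^ 2 = X₁ * (X₁ ^ 2 + A * X₁ + 1)) (h₂ : B * Y₂ ^ 2 = X₂ * (X₂ ^ 2 + A * X₂ + 1))
    (hX : X₁ ≠ X₂) :
    BiquadraticRel A (X₁, 1) (X₂, 1) (montgomeryAddX A B X₁ X₂ ((Y₁ - Y₂) / (X₁ - X₂)), 1)
      (montgomeryAddX A B X₁ X₂ ((Y₁ + Y₂) / (X₁ - X₂)), 1) := by
  have hd : X₁ - X₂ ≠ 0 := sub_ne_zero.mpr hX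
  refine ⟨((X₁ - X₂) ^ 2)⁻¹, by positivity, ?_, ?_, ?_⟩ <;> simp only [montgomeryAddX] <;>
    field_simp
  · linear_combination (B * Y₁ ^ 2 - B * Y₂ ^ 2 + X₁ * (X₁ ^ 2 + A * X₁ + 1)
      - X₂ * (X₂ ^ 2 + A * X₂ + 1)) * (h₁ - h₂) - 2 * (A + X₁ + X₂) * (X₁ - X₂) ^ 2 * (h₁ + h₂)
  · linear_combination 2 * h₁ + 2 * h₂

lemma biquadraticRel_double {X Y : F} (hB : B ≠ 0) (h : B * Y ^ 2 = X * (X ^ 2 + A * X + 1))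
    (hY : Y ≠ -Y) :
    BiquadraticRel A (X, 1) (X, 1)
      (montgomeryAddX A B X X ((3 * X ^ 2 + 2 * A * X + 1) / (2 * B * Y)), 1) (1, 0) := by
  have h2Y : 2 * Y ≠ 0 := fun h0 => hY (by linear_combination h0)
  have h2 : (2 : F) ≠ 0 := left_ne_zero_of_mul h2Y
  have hY0 : Y ≠ 0 := right_ne_zero_of_mul h2Y
  refine ⟨(B * (2 * Y) ^ 2)⁻¹, by positivity, ?_, ?_, ?_⟩ <;> simp only [montgomeryAddX]
  · field_simp
    linear_combination (-4) * (A + 2 * X) * h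
  · field_simp
    linear_combination 4 * h
  · ring

lemma biquadraticRel_two_torsion {X Y : F} (h : B * Y ^ 2 = X * (X ^ 2 + A * X + 1))
    (hY : Y = -Y) (hns : 3 * X ^ 2 + 2 * A * X + 1 ≠ 0) :
    BiquadraticRel A (X, 1) (X, 1) (1, 0) (1, 0) := by
  have hX : X ^ 2 - 1 ≠ 0 := fun h1 =>
    hns (by linear_combination -2 * X * h + X * B * Y * hY - (2 * X ^ 2 + 2 * A * X + 1) * h1)
  refine ⟨((X ^ 2 - 1) ^ 2)⁻¹, by positivity, ?_, ?_, ?_⟩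
  · field_simp
  · field_simp
    linear_combination 4 * h - 2 * B * Y * hY
  · ring

lemma montgomeryCurve_negY (x y : F) : (montgomeryCurve A B).negY x y = -y := by
  simp [montgomeryCurve]

lemma montgomeryCurve_equation_iff (hB : B ≠ 0) (x y : F) :
    (montgomeryCurve A B).Equation x y ↔
      B * (B * y) ^ 2 = B * x * ((B * x) ^ 2 + A * (B * x) + 1) := by
  rw [equation_iff]
  simp only [montgomeryCurve, zero_mul, add_zero]
  field_simp

lemma montgomeryCurve_partialX_ne_zero_of_Y_eq_neg (hB : B ≠ 0) {x y : F}
    (h : (montgomeryCurve A B).Nonsingular x y) (hy : y = -y) :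
    3 * (B * x) ^ 2 + 2 * A * (B * x) + 1 ≠ 0 := by
  have hsing := ((nonsingular_iff x y).mp h).2
  simp only [montgomeryCurve, zero_mul, sub_zero] at hsing
  have hx := (hsing.resolve_right (not_not.mpr hy)).symm
  contrapose! hx
  field_simp
  linear_combination hx

lemma montXLine_zero (W : WeierstrassCurve.Affine F) : montXLine B (0 : W.Point) = (1, 0) := rfl

lemma montXLine_some {W : WeierstrassCurve.Affine F} {x y : F} (h : W.Nonsingular x y) :
    montXLine B (Point.some x y h) = (B * x, 1) := rfl

lemma montXLine_neg {W : WeierstrassCurve.Affine F} (P : W.Point) :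
    montXLine B (-P) = montXLine B P := by
  cases P <;> rfl

variable [DecidableEq F]

lemma montXLine_add_of_X_ne (hB : B ≠ 0) {x₁ y₁ x₂ y₂ : F}
    {h₁ : (montgomeryCurve A B).Nonsingular x₁ y₁} {h₂ : (montgomeryCurve A B).Nonsingular x₂ y₂}
    (hx : x₁ ≠ x₂) :
    montXLine B (Point.some _ _ h₁ + Point.some _ _ h₂) =
      (montgomeryAddX A B (B * x₁) (B * x₂) ((B * y₁ - B * y₂) / (B * x₁ - B * x₂)), 1) := by
  rw [Point.add_of_X_ne hx, montXLine_some, slope_of_X_ne hx]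
  simp only [montgomeryAddX, addX, montgomeryCurve, Prod.mk.injEq, and_true]
  field_simp
  ring

lemma montXLine_add_self_of_Y_ne (hB : B ≠ 0) {x y : F}
    {h : (montgomeryCurve A B).Nonsingular x y} (hy : y ≠ -y) :
    montXLine B (Point.some _ _ h + Point.some _ _ h) =
      (montgomeryAddX A B (B * x) (B * x)
        ((3 * (B * x) ^ 2 + 2 * A * (B * x) + 1) / (2 * B * (B * y))), 1) := by
  rw [← montgomeryCurve_negY (A := A) (B := B) x y] at hy
  rw [Point.add_self_of_Y_ne hy, montXLine_some, slope_of_Y_ne rfl hy]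
  simp only [montgomeryAddX, addX, montgomeryCurve, negY, Prod.mk.injEq, and_true]
  field_simp
  ring

lemma biquadraticRel_montXLine_add_self (hB : B ≠ 0) (P : (montgomeryCurve A B).Point) :
    BiquadraticRel A (montXLine B P) (montXLine B P) (montXLine B (P + P)) (1, 0) := by
  rcases P with _ | ⟨x, y, h⟩
  · exact biquadraticRel_zero_left (1, 0)
  have heq := (montgomeryCurve_equation_iff hB x y).mp h.1
  by_cases hy : y = -y
  · rw [Point.add_self_of_Y_eq (by rwa [montgomeryCurve_negY]), montXLine_zero]
    exact biquadraticRel_two_torsion heq (by linear_combination B * hy)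
      (montgomeryCurve_partialX_ne_zero_of_Y_eq_neg hB h hy)
  · rw [montXLine_add_self_of_Y_ne hB hy]
    exact biquadraticRel_double hB heq fun h' => hy (mul_left_cancel₀ hB (by rw [h', mul_neg]))

theorem biquadraticRel_montXLine (hB : B ≠ 0) (P Q : (montgomeryCurve A B).Point) :
    BiquadraticRel A (montXLine B P) (montXLine B Q) (montXLine B (P + Q))
      (montXLine B (P - Q)) := by
  rcases P with _ | ⟨x₁, y₁, h₁⟩
  · simpa only [← Point.zero_def, zero_add, zero_sub, montXLine_neg, montXLine_zero]
      using biquadraticRel_zero_left _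
  rcases Q with _ | ⟨x₂, y₂, h₂⟩
  · simpa only [← Point.zero_def, add_zero, sub_zero, montXLine_zero]
      using biquadraticRel_zero_right _
  by_cases hx : x₁ = x₂
  · rcases Point.X_eq_iff.mp hx with hPQ | hPQ
    · rw [hPQ, sub_self, montXLine_zero]
      exact biquadraticRel_montXLine_add_self hB _
    · rw [hPQ, neg_add_cancel, ← neg_add', montXLine_neg, montXLine_neg, montXLine_zero]
      exact (biquadraticRel_montXLine_add_self hB _).symm
  · rw [sub_eq_add_neg, Point.neg_some, montXLine_add_of_X_ne hB hx,
      montXLine_add_of_X_ne hB hx, montgomeryCurve_negY, mul_neg, sub_neg_eq_add]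
    exact biquadraticRel_of_X_ne ((montgomeryCurve_equation_iff hB x₁ y₁).mp h₁.1)
      ((montgomeryCurve_equation_iff hB x₂ y₂).mp h₂.1) (fun h => hx (mul_left_cancel₀ hB h))

end

theorem montgomery_biquadratic_identity_general {p : ℕ} [Fact p.Prime]
    (A B : ZMod p) (hB : B ≠ 0)
    (W : WeierstrassCurve.Affine (ZMod p))
    (hW : W = { a₁ := 0, a₂ := A / B, a₃ := 0, a₄ := 1 / B ^ 2, a₆ := 0 })
    (P Q : W.Point)
    (XP ZP XQ ZQ XS ZS XD ZD BXX BXZ BZZ : ZMod p)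
    (hP : (XP, ZP) = montXLine B P) (hQ : (XQ, ZQ) = montXLine B Q)
    (hS : (XS, ZS) = montXLine B (P + Q)) (hD : (XD, ZD) = montXLine B (P - Q))
    (hBXX : BXX = (XP * XQ - ZP * ZQ) ^ 2)
    (hBXZ : BXZ = (XP * XQ + ZP * ZQ) * (XP * ZQ + ZP * XQ) + 2 * A * XP * ZP * XQ * ZQ)
    (hBZZ : BZZ = (XP * ZQ - ZP * XQ) ^ 2) :
    ∃ lam : ZMod p, lam ≠ 0 ∧
      XS * XD = lam * BXX ∧
      XS * ZD + ZS * XD = lam * (2 * BXZ) ∧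
      ZS * ZD = lam * BZZ := by
  subst hW hBXX hBXZ hBZZ
  show BiquadraticRel A (XP, ZP) (XQ, ZQ) (XS, ZS) (XD, ZD)
  rw [hP, hQ, hS, hD]
  exact biquadraticRel_montXLine hB P Q

/-- the projective identity
`(X^S X^D : X^S Z^D + Z^S X^D : Z^S Z^D) = (B_XX : 2B_XZ : B_ZZ)` for `S = P + Q`,
`D = P − Q`, including all degenerate cases. -/
theorem montgomery_biquadratic_identity {p : ℕ} [Fact p.Prime] (hp : 3 < p)
    (A B : ZMod p) (hA : A ^ 2 ≠ 4) (hB : B ≠ 0)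
    (W : WeierstrassCurve.Affine (ZMod p))
    (hW : W = { a₁ := 0, a₂ := A / B, a₃ := 0, a₄ := 1 / B ^ 2, a₆ := 0 })
    (P Q : W.Point)
    (XP ZP XQ ZQ XS ZS XD ZD BXX BXZ BZZ : ZMod p)
    (hP : (XP, ZP) = montXLine B P) (hQ : (XQ, ZQ) = montXLine B Q)
    (hS : (XS, ZS) = montXLine B (P + Q)) (hD : (XD, ZD) = montXLine B (P - Q))
    (hBXX : BXX = (XP * XQ - ZP * ZQ) ^ 2)
    (hBXZ : BXZ = (XP * XQ + ZP * ZQ) * (XP * ZQ + ZP * XQ) + 2 * A * XP * ZP * XQ * ZQ)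
    (hBZZ : BZZ = (XP * ZQ - ZP * XQ) ^ 2) :
    ∃ lam : ZMod p, lam ≠ 0 ∧
      XS * XD = lam * BXX ∧
      XS * ZD + ZS * XD = lam * (2 * BXZ) ∧
      ZS * ZD = lam * BZZ :=
  montgomery_biquadratic_identity_general A B hB W hW P Q XP ZP XQ ZQ XS ZS XD ZD BXX BXZ BZZ hP hQ
    hS hD hBXX hBXZ hBZZ
end

section
/- Let G be a cyclic group of prime order N generated by P, let d ∈ Z_N, Q = [d]P. Consider the distribution δ of triples (±R, c, s) with c uniform in Z_N^+, r uniform in Z_N \ {0}, ±R = ±[r]P, s = r − cd mod N; and the distribution δ' of triples (±R, c, s) with c uniform in Z_N^+, s uniform in Z_N subject to [s]P + [c]Q ≠ 0, and R = [s]P + [c]Q. Then δ and δ' are identical distributions, each uniform on a set of (N²−1)/2 triples. -/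
def pmClass (G : Type*) [AddCommGroup G] : G → Quot (fun a b : G => a = -b) :=
  Quot.mk _

section aux
variable {G : Type*} [AddCommGroup G] {N : ℕ}

lemma aux_smul_mod (P : G) (hP : addOrderOf P = N) (m : ℕ) : (m % N) • P = m • P := by
  conv_rhs => rw [← Nat.div_add_mod m N]
  rw [add_nsmul, mul_nsmul, ← hP, addOrderOf_nsmul_eq_zero, smul_zero, zero_add]

lemma aux_val_add [NeZero N] (P : G) (hP : addOrderOf P = N) (a b : ZMod N) :
    (a + b).val • P = a.val • P + b.val • P := by
  rw [ZMod.val_add, aux_smul_mod P hP, add_nsmul]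

lemma aux_val_mul [NeZero N] (P : G) (hP : addOrderOf P = N) (a b : ZMod N) :
    (a * b).val • P = (a.val * b.val) • P := by
  rw [ZMod.val_mul, aux_smul_mod P hP]

lemma aux_val_zero [NeZero N] (P : G) (hP : addOrderOf P = N) (x : ZMod N) :
    x.val • P = 0 ↔ x = 0 := by
  constructor
  · intro h
    have hd : addOrderOf P ∣ x.val := addOrderOf_dvd_of_nsmul_eq_zero h
    rw [hP] at hd
    have hd' := hd
    have := Nat.eq_zero_of_dvd_of_lt hd'
    rcases Nat.eq_zero_or_pos x.val with h0 | hpos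
    · exact (ZMod.val_eq_zero x).mp h0
    · exact absurd (this (ZMod.val_lt x)) hpos.ne'
  · rintro rfl; simp

end aux

/-- honest-verifier zero-knowledge of qID.  The honest transcript
distribution `δ` (parametrized injectively by `(c, r)` with `c ∈ Z_N^+`, `r ≠ 0`) and
the simulated distribution `δ'` (parametrized injectively by `(c, s)` with `c ∈ Z_N^+`
and `[s]P + [c]Q ≠ 0`) are uniform on the same set of `(N² − 1)/2` triples. -/
theorem qid_hvzk {G : Type*} [AddCommGroup G]
    (N : ℕ) (hN : N.Prime) (hNodd : Odd N)
    (P : G) (hP : addOrderOf P = N) (hcyc : ∀ g : G, ∃ k : ℕ, g = k • P)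
    (d : ZMod N) (Q : G) (hQ : Q = d.val • P)
    (f g : ZMod N × ZMod N → Quot (fun a b : G => a = -b) × ZMod N × ZMod N)
    (hf : ∀ c r : ZMod N, f (c, r) = (pmClass G (r.val • P), c, r - c * d))
    (hg : ∀ c s : ZMod N, g (c, s) = (pmClass G (s.val • P + c.val • Q), c, s))
    (A B : Set (ZMod N × ZMod N))
    (hA : A = {cr | cr.1.val % 2 = 0 ∧ cr.2 ≠ 0})
    (hB : B = {cs | cs.1.val % 2 = 0 ∧ cs.2.val • P + cs.1.val • Q ≠ 0}) :
    Set.InjOn f A ∧ Set.InjOn g B ∧ f '' A = g '' B ∧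
      Nat.card (f '' A) = (N ^ 2 - 1) / 2 := by
  haveI : NeZero N := ⟨hN.ne_zero⟩
  have hsum : ∀ c s : ZMod N, s.val • P + c.val • Q = (s + c * d).val • P := by
    intro c s
    rw [hQ, smul_smul, ← aux_val_mul P hP, aux_val_add P hP]
  have hinjf : Set.InjOn f A := by
    rintro ⟨c1, r1⟩ - ⟨c2, r2⟩ - h
    rw [hf, hf] at h
    simp only [Prod.mk.injEq] at h
    obtain ⟨-, hc, hs⟩ := h
    subst hc
    have hr : r1 = r2 := by
      have := sub_left_inj.mp hs
      linear_combination hs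
    simp [hr]
  have hinjg : Set.InjOn g B := by
    rintro ⟨c1, s1⟩ - ⟨c2, s2⟩ - h
    rw [hg, hg] at h
    simp only [Prod.mk.injEq] at h
    simp [h.2.1, h.2.2]
  have himg : f '' A = g '' B := by
    ext t
    simp only [Set.mem_image]
    constructor
    · rintro ⟨⟨c, r⟩, hmem, rfl⟩
      rw [hA] at hmem
      obtain ⟨hc, hr⟩ := hmem
      refine ⟨(c, r - c * d), ?_, ?_⟩
      · rw [hB]
        refine ⟨hc, ?_⟩
        rw [hsum, sub_add_cancel]
        rw [Ne, aux_val_zero P hP]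
        exact hr
      · rw [hg, hf, hsum, sub_add_cancel]
    · rintro ⟨⟨c, s⟩, hmem, rfl⟩
      rw [hB] at hmem
      obtain ⟨hc, hs⟩ := hmem
      refine ⟨(c, s + c * d), ?_, ?_⟩
      · rw [hA]
        refine ⟨hc, ?_⟩
        intro h0
        apply hs
        have h0' : s + c * d = 0 := h0
        show s.val • P + c.val • Q = 0
        rw [hsum, h0']
        simp
      · rw [hf, hg, hsum, add_sub_cancel_right]
  refine ⟨hinjf, hinjg, himg, ?_⟩
  have hcard1 : Nat.card (f '' A) = Nat.card A := by
    rw [Nat.card_coe_set_eq, Nat.card_coe_set_eq, Set.ncard_image_of_injOn hinjf]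
  rw [hcard1, hA]
  have hprod : {cr : ZMod N × ZMod N | cr.1.val % 2 = 0 ∧ cr.2 ≠ 0}
      = {c : ZMod N | c.val % 2 = 0} ×ˢ {r : ZMod N | r ≠ 0} := by
    ext ⟨c, r⟩; simp [Set.mem_prod]
  rw [hprod]
  rw [Nat.card_congr (Equiv.Set.prod _ _), Nat.card_prod]
  obtain ⟨k, hk⟩ := hNodd
  have hS : Nat.card {c : ZMod N | c.val % 2 = 0} = k + 1 := by
    have e : {c : ZMod N | c.val % 2 = 0} ≃ Fin (k + 1) :=
      { toFun := fun c => ⟨c.1.val / 2, by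
          have := c.1.val_lt
          have h2 := c.2
          simp only [Set.mem_setOf_eq] at h2
          omega⟩
        invFun := fun m => ⟨((2 * m.1 : ℕ) : ZMod N), by
          have hm := m.2
          simp only [Set.mem_setOf_eq]
          rw [ZMod.val_natCast_of_lt (by omega)]
          omega⟩
        left_inv := fun c => by
          have h2 := c.2
          simp only [Set.mem_setOf_eq] at h2
          ext
          simp only
          have : 2 * (c.1.val / 2) = c.1.val := by omega
          rw [this, ZMod.natCast_val, ZMod.cast_id]
        right_inv := fun m => by
          have hm := m.2
          ext
          simp only
          rw [ZMod.val_natCast_of_lt (by omega)]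
          omega }
    rw [Nat.card_congr e, Nat.card_eq_fintype_card, Fintype.card_fin]
  have hT : Nat.card {r : ZMod N | r ≠ 0} = N - 1 := by
    have : {r : ZMod N | r ≠ 0} = ({0} : Set (ZMod N))ᶜ := by ext; simp
    rw [this, Nat.card_coe_set_eq]
    have h := Set.ncard_add_ncard_compl ({0} : Set (ZMod N))
    rw [Set.ncard_singleton, Nat.card_eq_fintype_card, ZMod.card] at h
    omega
  rw [hS, hT, hk]
  have h1 : (2 * k + 1) ^ 2 = 4 * (k * k) + 4 * k + 1 := by ring
  have h2 : (k + 1) * (2 * k + 1 - 1) = 2 * (k * k) + 2 * k := by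
    rw [Nat.add_sub_cancel]; ring
  rw [h1, h2]
  generalize k * k = m
  omega
end

section
/- Let μ₁, μ₂, μ₃, μ₄ be field elements, εᵢ = ∏_{j≠i} μⱼ, κ₁ = ε₁+ε₂+ε₃+ε₄, κ₂ = ε₁+ε₂−ε₃−ε₄, κ₃ = ε₁−ε₂+ε₃−ε₄, κ₄ = ε₁−ε₂−ε₃+ε₄, and let κ̂ᵢ denote the analogous quantities built from the dual constants μ̂ᵢ (half the Hadamard transform of the μᵢ). Then the 4×4 matrix with rows (κ̂₄,κ̂₃,κ̂₂,κ̂₁), (κ̂₃,κ̂₄,κ̂₁,κ̂₂), (κ̂₂,κ̂₁,κ̂₄,κ̂₃), (κ̂₁,κ̂₂,κ̂₃,κ̂₄) times the 4×4 matrix with rows (μ₁,μ₂,μ₃,μ₄), (μ₂,μ₁,μ₄,μ₃), (μ₃,μ₄,μ₁,μ₂), (μ₄,μ₃,μ₂,μ₁) equals 8 μ̂₁μ̂₂μ̂₃μ̂₄ times the antidiagonal permutation matrix (with ones on positions (1,4), (2,3), (3,2), (4,1)). -/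
open Matrix

set_option maxHeartbeats 4000000 in
/-- the key matrix identity
`(κ̂-matrix) · (μ-matrix) = 8 μ̂₁μ̂₂μ̂₃μ̂₄ · (antidiagonal permutation matrix)`. -/
theorem kappa_mu_matrix_identity {F : Type*} [Field F] (hchar2 : (2 : F) ≠ 0)
    (μ1 μ2 μ3 μ4 μh1 μh2 μh3 μh4 : F)
    (hμh1 : μh1 = (μ1 + μ2 + μ3 + μ4) / 2)
    (hμh2 : μh2 = (μ1 + μ2 - μ3 - μ4) / 2)
    (hμh3 : μh3 = (μ1 - μ2 + μ3 - μ4) / 2)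
    (hμh4 : μh4 = (μ1 - μ2 - μ3 + μ4) / 2)
    (εh1 εh2 εh3 εh4 κh1 κh2 κh3 κh4 : F)
    (heh1 : εh1 = μh2 * μh3 * μh4) (heh2 : εh2 = μh1 * μh3 * μh4)
    (heh3 : εh3 = μh1 * μh2 * μh4) (heh4 : εh4 = μh1 * μh2 * μh3)
    (hκh1 : κh1 = εh1 + εh2 + εh3 + εh4) (hκh2 : κh2 = εh1 + εh2 - εh3 - εh4)
    (hκh3 : κh3 = εh1 - εh2 + εh3 - εh4) (hκh4 : κh4 = εh1 - εh2 - εh3 + εh4) :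
    (!![κh4, κh3, κh2, κh1;
        κh3, κh4, κh1, κh2;
        κh2, κh1, κh4, κh3;
        κh1, κh2, κh3, κh4] : Matrix (Fin 4) (Fin 4) F) *
      !![μ1, μ2, μ3, μ4;
         μ2, μ1, μ4, μ3;
         μ3, μ4, μ1, μ2;
         μ4, μ3, μ2, μ1] =
    (8 * μh1 * μh2 * μh3 * μh4) •
      !![0, 0, 0, 1;
         0, 0, 1, 0;
         0, 1, 0, 0;
         1, 0, 0, 0] := by
  have hm1 : μ1 = (μh1+μh2+μh3+μh4)/2 := by
    rw [hμh1, hμh2, hμh3, hμh4]; field_simp; ring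
  have hm2 : μ2 = (μh1+μh2-μh3-μh4)/2 := by
    rw [hμh1, hμh2, hμh3, hμh4]; field_simp; ring
  have hm3 : μ3 = (μh1-μh2+μh3-μh4)/2 := by
    rw [hμh1, hμh2, hμh3, hμh4]; field_simp; ring
  have hm4 : μ4 = (μh1-μh2-μh3+μh4)/2 := by
    rw [hμh1, hμh2, hμh3, hμh4]; field_simp; ring
  ext i j
  fin_cases i <;> fin_cases j <;>
    simp [Matrix.mul_apply, Fin.sum_univ_four, Matrix.smul_apply, Matrix.vecHead, Matrix.vecTail] <;>
    rw [hκh1, hκh2, hκh3, hκh4, heh1, heh2, heh3, heh4, hm1, hm2, hm3, hm4] <;>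
    field_simp <;> ring
end

section
/- Let K₂, K₃, K₄ be the homogeneous polynomials of degrees 2, 3, 4 in L₁, L₂, L₃ defined by K₂ = r₃²L₁² + r₂²L₂² + r₁²L₃² − 2(r₃s₃L₂L₃ + r₂s₂L₁L₃ + r₁s₁L₁L₂), K₃ = r₁s₁(L₁²+L₂²)L₃ + r₂s₂(L₁²+L₃²)L₂ + r₃s₃(L₂²+L₃²)L₁ + (2t − (r₁²+r₂²+r₃²))L₁L₂L₃, K₄ = r₃²L₂²L₃² + r₂²L₁²L₃² + r₁²L₁²L₂² − 2(r₃s₃L₁ + r₂s₂L₂ + r₁s₁L₃)L₁L₂L₃, with the Gaudry–Schost constants over F_p, p = 2¹²⁷−1 (i.e., r_i, s_i, t computed from (μ₁,μ₂,μ₃,μ₄) = (−11,22,19,3)). If (l₁ : l₂ : l₃ : l₄) is a point on the corresponding tetragonal Kummer surface K^Tet and K₂(l₁,l₂,l₃) = K₃(l₁,l₂,l₃) = K₄(l₁,l₂,l₃) = 0, then l₁ = l₂ = l₃ = 0. -/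
set_option maxHeartbeats 1600000 in
/-- for the tetragonal Kummer surface with the Gaudry–Schost constants
over `F_p`, `p = 2¹²⁷ − 1`, a point `(l₁ : l₂ : l₃ : l₄)` of `K^Tet` with
`K₂ = K₃ = K₄ = 0` at `(l₁, l₂, l₃)` must have `l₁ = l₂ = l₃ = 0`. -/
theorem tetragonal_Ki_vanish_iff_zero [Fact (Nat.Prime (2 ^ 127 - 1))]
    (μ1 μ2 μ3 μ4 μh1 μh2 μh3 μh4 : ZMod (2 ^ 127 - 1))
    (h1 : μ1 = -11) (h2 : μ2 = 22) (h3 : μ3 = 19) (h4 : μ4 = 3)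
    (hμh1 : μh1 = (μ1 + μ2 + μ3 + μ4) / 2)
    (hμh2 : μh2 = (μ1 + μ2 - μ3 - μ4) / 2)
    (hμh3 : μh3 = (μ1 - μ2 + μ3 - μ4) / 2)
    (hμh4 : μh4 = (μ1 - μ2 - μ3 + μ4) / 2)
    (t r1 r2 r3 s1 s2 s3 : ZMod (2 ^ 127 - 1))
    (hr1 : r1 = (μ1 * μ3 - μ2 * μ4) * (μ1 * μ4 - μ2 * μ3))
    (hr2 : r2 = (μ1 * μ2 - μ3 * μ4) * (μ1 * μ4 - μ2 * μ3))
    (hr3 : r3 = (μ1 * μ2 - μ3 * μ4) * (μ1 * μ3 - μ2 * μ4))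
    (hs1 : s1 = (μ1 * μ2 - μ3 * μ4) * (μ1 * μ2 + μ3 * μ4))
    (hs2 : s2 = (μ1 * μ3 - μ2 * μ4) * (μ1 * μ3 + μ2 * μ4))
    (hs3 : s3 = (μ1 * μ4 - μ2 * μ3) * (μ1 * μ4 + μ2 * μ3))
    (ht : t = 16 * μ1 * μ2 * μ3 * μ4 * μh1 * μh2 * μh3 * μh4)
    (l1 l2 l3 l4 : ZMod (2 ^ 127 - 1))
    (honK : 4 * t * l1 * l2 * l3 * l4 =
      r1 ^ 2 * (l1 * l2 + l3 * l4) ^ 2 + r2 ^ 2 * (l1 * l3 + l2 * l4) ^ 2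
        + r3 ^ 2 * (l1 * l4 + l2 * l3) ^ 2
        - 2 * r1 * s1 * ((l1 ^ 2 + l2 ^ 2) * l3 * l4 + l1 * l2 * (l3 ^ 2 + l4 ^ 2))
        - 2 * r2 * s2 * ((l1 ^ 2 + l3 ^ 2) * l2 * l4 + l1 * l3 * (l2 ^ 2 + l4 ^ 2))
        - 2 * r3 * s3 * ((l1 ^ 2 + l4 ^ 2) * l2 * l3 + l1 * l4 * (l2 ^ 2 + l3 ^ 2)))
    (hK2 : r3 ^ 2 * l1 ^ 2 + r2 ^ 2 * l2 ^ 2 + r1 ^ 2 * l3 ^ 2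
      - 2 * (r3 * s3 * l2 * l3 + r2 * s2 * l1 * l3 + r1 * s1 * l1 * l2) = 0)
    (hK3 : r1 * s1 * (l1 ^ 2 + l2 ^ 2) * l3 + r2 * s2 * (l1 ^ 2 + l3 ^ 2) * l2
      + r3 * s3 * (l2 ^ 2 + l3 ^ 2) * l1
      + (2 * t - (r1 ^ 2 + r2 ^ 2 + r3 ^ 2)) * l1 * l2 * l3 = 0)
    (hK4 : r3 ^ 2 * l2 ^ 2 * l3 ^ 2 + r2 ^ 2 * l1 ^ 2 * l3 ^ 2 + r1 ^ 2 * l1 ^ 2 * l2 ^ 2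
      - 2 * (r3 * s3 * l1 + r2 * s2 * l2 + r1 * s1 * l3) * l1 * l2 * l3 = 0) :
    l1 = 0 ∧ l2 = 0 ∧ l3 = 0 := by
  subst h1 h2 h3 h4 hμh1 hμh2 hμh3 hμh4 hr1 hr2 hr3 hs1 hs2 hs3
  have two : (2 : ZMod (2 ^ 127 - 1)) ≠ 0 := by
    intro h
    have h2 : ((2 : ℕ) : ZMod (2 ^ 127 - 1)) = 0 := by exact_mod_cast h
    rw [ZMod.natCast_eq_zero_iff] at h2
    norm_num at h2
  have ht' : t = 4171015926 := by
    rw [ht]; field_simp; ring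
  subst ht'
  have hp : (170141183460469231731687303715884105727 : ZMod (2 ^ 127 - 1)) = 0 := by
    have h := ZMod.natCast_self (2 ^ 127 - 1)
    rw [show (2 ^ 127 - 1 : ℕ) = 170141183460469231731687303715884105727 from by norm_num] at h
    exact_mod_cast h
  have e1 : l1 ^ 7 = 0 := by
    linear_combination ((-19826060421164558972050315933170622697) * l1 ^ 5 + 10863628131061814800218689516516584755 * l1 ^ 4 * l2 + (-46783633431817915607945760119411755263) * l1 ^ 4 * l3 + 2799743352936244745711478000073812946 * l1 ^ 3 * l2 ^ 2 + (-9077533560707579861110306042074967921) * l1 ^ 3 * l2 * l3 + 38383034116094864985071571451585283856 * l1 ^ 3 * l3 ^ 2 + (-38914503436267091891415320585072044409) * l1 ^ 2 * l2 ^ 3 + 64678274567232446578568021904777476462 * l1 ^ 2 * l2 ^ 2 * l3 + 3116711560020930198423081608501652034 * l1 ^ 2 * l2 * l3 ^ 2 + 15476825210534168438605780450727388959 * l1 ^ 2 * l3 ^ 3 + 57594909709013917521786013299763557164 * l1 * l2 ^ 4 + 47396799891439534629574718855056280845 * l1 * l2 ^ 3 * l3 + 16499702482552632333183184102060494394 *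 l1 * l2 ^ 2 * l3 ^ 2 + 78725522880921047766184419103551468971 * l1 * l2 * l3 ^ 3 + (-15841521039679703053260455194785888781) * l1 * l3 ^ 4 + (-32094727612395498854148793500298958786) * l2 ^ 4 * l3 + (-55538675301960105535911873232692812842) * l2 ^ 3 * l3 ^ 2 + 10288880151841090974214702480359145438 * l2 ^ 2 * l3 ^ 3 + (-62172479855163802987178180985433169315) * l2 * l3 ^ 4) * hK2 +
      ((-44382337679286288010719631943083110879) * l1 * l2 ^ 3 + 62701972082719728912282968929997397232 * l1 * l2 ^ 2 * l3 + (-68139504061699552986216577241247945978) * l1 * l2 * l3 ^ 2 + (-18785682501730948703074093259279148675) * l1 * l3 ^ 3 + 27608375618400752537970700781827883808 * l2 ^ 4 + 37338275557441519363019126370206700483 * l2 ^ 3 * l3 + (-62053319883497074175226999193955972349) * l2 ^ 2 * l3 ^ 2 + 39375419257444206040202137086989345692 * l2 * l3 ^ 3 + (-31862553910312054734959109288357900833) * l3 ^ 4) * hK3 +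
      (32303099679365133411218596550852235260 * l1 * l2 * l3 + 37995675624799456038991340797158052664 * l1 * l3 ^ 2 + (-12676424097983339426276057655653063221) * l2 ^ 3 + (-77842245423926229300372168265105552462) * l2 ^ 2 * l3 + (-63921493536520888606061528994848746886) * l2 * l3 ^ 2 + 28967757552240341585788127644468638487 * l3 ^ 3) * hK4 +
      (787834038 * l1 ^ 7 + (-2030546375) * l1 ^ 6 * l2 + 623183275 * l1 ^ 6 * l3 + 2883791911 * l1 ^ 5 * l2 ^ 2 + 592431125 * l1 ^ 5 * l2 * l3 + (-2649086275) * l1 ^ 5 * l3 ^ 2 + 611063310 * l1 ^ 4 * l2 ^ 3 + 49239619 * l1 ^ 4 * l2 ^ 2 * l3 + 9275052325 * l1 ^ 4 * l2 * l3 ^ 2 + 6007262800 * l1 ^ 4 * l3 ^ 3 + (-4342818623) * l1 ^ 3 * l2 ^ 4 + (-1678123227) * l1 ^ 3 * l2 ^ 3 * l3 + (-8465458628) * l1 ^ 3 * l2 ^ 2 * l3 ^ 2 + (-13803099805) * l1 ^ 3 * l2 * l3 ^ 3 + (-5179295132) * l1 ^ 3 * l3 ^ 4 + 5365058567 * l1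 ^ 2 * l2 ^ 5 + 12112133396 * l1 ^ 2 * l2 ^ 4 * l3 + 23807895265 * l1 ^ 2 * l2 ^ 3 * l3 ^ 2 + 12495986778 * l1 ^ 2 * l2 ^ 2 * l3 ^ 3 + (-1588441657) * l1 ^ 2 * l2 * l3 ^ 4 + (-5774336106) * l1 ^ 2 * l3 ^ 5 + (-3838881332) * l1 * l2 ^ 6 + (-7997114939) * l1 * l2 ^ 5 * l3 + (-24295146051) * l1 * l2 ^ 4 * l3 ^ 2 + (-34081249136) * l1 * l2 ^ 3 * l3 ^ 3 + (-19839626818) * l1 * l2 ^ 2 * l3 ^ 4 + (-8098608771) * l1 * l2 * l3 ^ 5 + (-1241490250) * l1 * l3 ^ 6 + 2316975518 * l2 ^ 6 * l3 + 9459867846 * l2 ^ 5 * l3 ^ 2 + 15554475706 * l2 ^ 4 * l3 ^ 3 + 12825687820 * l2 ^ 3 * l3 ^ 4 + 8410431700 * l2 ^ 2 * l3 ^ 5 + 6614005200 * l2 * l3 ^ 6) * hp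
  have e2 : l2 ^ 7 = 0 := by
    linear_combination ((-4471075160410760211709193875033345855) * l1 * l2 ^ 4 + 4773799638725580117478333718130586524 * l1 * l2 ^ 3 * l3 + (-35413365185841003757957158995838989318) * l1 * l2 ^ 2 * l3 ^ 2 + (-58607843315661789708394570808866637058) * l1 * l2 * l3 ^ 3 + 61000863928711126756710563423580206099 * l1 * l3 ^ 4 + (-5650736254848228684171780663332307786) * l2 ^ 5 + 69673103845334406180442247124559207340 * l2 ^ 4 * l3 + 59713258803692549953806716160574832229 * l2 ^ 3 * l3 ^ 2 + 33757175125145169260773787876826316717 * l2 ^ 2 * l3 ^ 3 + 6509596276844878358653899936821770145 * l2 * l3 ^ 4) * hK2 +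
      ((-62959705482415106548634817734249963139) * l1 * l2 ^ 3 + 34383892141747162423794214717751311141 * l1 * l2 ^ 2 * l3 + 55378624472499612123414761508608307667 * l1 * l2 * l3 ^ 2 + (-61258673571281671064545993093702580878) * l1 * l3 ^ 3 + (-12903121683985963095575112595851124718) * l2 ^ 4 + 84723281590739128943662416049663962005 * l2 ^ 3 * l3 + 75738311143699545330211628528978463340 * l2 ^ 2 * l3 ^ 2 + 38127033430009053990040672250029903431 * l2 * l3 ^ 3 + 33775185408160144656392360324811711038 * l3 ^ 4) * hK3 +
      (1579684504049277720168055180743694686 * l1 * l2 * l3 + (-52023018817482178766145112767298364373) * l1 * l3 ^ 2 + (-22164216352690079138845850459055697172) * l2 ^ 3 + (-61435086048279758214657228649752411062) * l2 ^ 2 * l3 + (-79452465035597018678637728941507124022) * l2 * l3 ^ 2 + (-29299279952119972522678059134665576773) * l3 ^ 3) * hK4 +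
      (2139987850 * l1 ^ 3 * l2 ^ 4 + 1134477850 * l1 ^ 3 * l2 ^ 3 * l3 + 2732975575 * l1 ^ 3 * l2 ^ 2 * l3 ^ 2 + 10567270857 * l1 ^ 3 * l2 * l3 ^ 3 + 5606153124 * l1 ^ 3 * l3 ^ 4 + (-3013193425) * l1 ^ 2 * l2 ^ 5 + (-4459428743) * l1 ^ 2 * l2 ^ 4 * l3 + 15080779703 * l1 ^ 2 * l2 ^ 3 * l3 ^ 2 + 15071758185 * l1 ^ 2 * l2 ^ 2 * l3 ^ 3 + 761601225 * l1 ^ 2 * l2 * l3 ^ 4 + 431651649 * l1 ^ 2 * l3 ^ 5 + (-1060587385) * l1 * l2 ^ 6 + 11347408072 * l1 * l2 ^ 5 * l3 + 28705575844 * l1 * l2 ^ 4 * l3 ^ 2 + 29492715934 * l1 * l2 ^ 3 * l3 ^ 3 + 20082074760 * l1 * l2 ^ 2 * l3 ^ 4 + 4562197431 * l1 * l2 * l3 ^ 5 + (-2680800375) * l1 * l3 ^ 6 + 603936181 * l2 ^ 7 + (-5977856170) * l2 ^ 6 * l3 + (-19697458352) * l2 ^ 5 * l3 ^ 2 + (-23181715546)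 * l2 ^ 4 * l3 ^ 3 + (-12500411385) * l2 ^ 3 * l3 ^ 4 + (-5530368525) * l2 ^ 2 * l3 ^ 5 + (-1641222825) * l2 * l3 ^ 6) * hp
  have e3 : l3 ^ 7 = 0 := by
    linear_combination ((-11400528835744397890817820816341037000) * l1 * l2 ^ 4 + 53608368390475912344399234772763238733 * l1 * l2 ^ 3 * l3 + 37149174216096990897482383151958510501 * l1 * l2 ^ 2 * l3 ^ 2 + (-49148928845601417728104767281598272082) * l1 * l2 * l3 ^ 3 + (-27412941924641073193889610103436238681) * l1 * l3 ^ 4 + (-74068351138368176888058228098275447236) * l2 ^ 4 * l3 + (-72256360211633905255696872232880486830) * l2 ^ 3 * l3 ^ 2 + 42707002649911117609225515501618057679 * l2 ^ 2 * l3 ^ 3 + 38154036798034660559283871308980490202 * l2 * l3 ^ 4 + (-32681033113022537569808284722341081101) * l3 ^ 5) * hK2 +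
      ((-57897567946467990477303138235152221784) * l1 * l2 ^ 3 + (-363376108500570543394080027896295719) * l1 * l2 ^ 2 * l3 + (-43840504765182836396484728364313161787) * l1 * l2 * l3 ^ 2 + 16215750270176953379691725824490887755 * l1 * l3 ^ 3 + (-32197430281336083685737451335419104240) * l2 ^ 4 + (-65176888749411868807333246145640723921) * l2 ^ 3 * l3 + 8780806748350224547245040185398504888 * l2 ^ 2 * l3 ^ 2 + 67557232718538417885191530483729286167 * l2 * l3 ^ 3 + 34136026635931777858811523021387784188 * l3 ^ 4) * hK3 +
      ((-75707054199331047392158193413291396066) * l1 * l2 * l3 + (-44985724458766600519258849245517023690) * l1 * l3 ^ 2 + (-16810714442364570785449507910486138760) * l2 ^ 3 + (-55936638985908182219013869615253424949) * l2 ^ 2 * l3 + 39207647373475135159958278141954600454 * l2 * l3 ^ 2 + 72537102187688776452261991086127654715 * l3 ^ 3) * hK4 +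
      (2257569600 * l1 ^ 3 * l2 ^ 4 + 7060180600 * l1 ^ 3 * l2 ^ 3 * l3 + 16677632675 * l1 ^ 3 * l2 ^ 2 * l3 ^ 2 + 18856567158 * l1 ^ 3 * l2 * l3 ^ 3 + 5243422470 * l1 ^ 3 * l3 ^ 4 + (-3254416000) * l1 ^ 2 * l2 ^ 5 + 6849105417 * l1 ^ 2 * l2 ^ 4 * l3 + 5878136077 * l1 ^ 2 * l2 ^ 3 * l3 ^ 2 + (-28785321257) * l1 ^ 2 * l2 ^ 2 * l3 ^ 3 + (-31200845467) * l1 ^ 2 * l2 * l3 ^ 4 + (-8178443845) * l1 ^ 2 * l3 ^ 5 + (-1483339000) * l1 * l2 ^ 6 + (-20024859184) * l1 * l2 ^ 5 * l3 + (-39621905565) * l1 * l2 ^ 4 * l3 ^ 2 + (-2317445603) * l1 * l2 ^ 3 * l3 ^ 3 + 40044099007 * l1 * l2 ^ 2 * l3 ^ 4 + 26217516006 * l1 * l2 * l3 ^ 5 + 3305638325 * l1 * l3 ^ 6 + 9214501868 * l2 ^ 6 * l3 + 24452843415 * l2 ^ 5 * l3 ^ 2 + 18158689373 * l2 ^ 4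 * l3 ^ 3 + (-9268337551) * l2 ^ 3 * l3 ^ 4 + (-13135962312) * l2 ^ 2 * l3 ^ 5 + 971363800 * l2 * l3 ^ 6 + 2954641538 * l3 ^ 7) * hp
  exact ⟨pow_eq_zero_iff (by norm_num : 7 ≠ 0) |>.mp e1,
    pow_eq_zero_iff (by norm_num : 7 ≠ 0) |>.mp e2,
    pow_eq_zero_iff (by norm_num : 7 ≠ 0) |>.mp e3⟩
end

section
/- Let μ₁, μ₂, μ₃, μ₄ be field elements and let T : P³ → P³ be the linear map sending (X₁:X₂:X₃:X₄) to (L₁:L₂:L₃:L₄) with L₁ = κ̂₄X₁+κ̂₃X₂+κ̂₂X₃+κ̂₁X₄, L₂ = κ̂₃X₁+κ̂₄X₂+κ̂₁X₃+κ̂₂X₄, L₃ = κ̂₂X₁+κ̂₁X₂+κ̂₄X₃+κ̂₃X₄, L₄ = κ̂₁X₁+κ̂₂X₂+κ̂₃X₃+κ̂₄X₄, where the κ̂ᵢ are the dual kappa constants. Assume μ̂₁μ̂₂μ̂₃μ̂₄ ≠ 0. Then T maps the four nodes N₀ = (μ₁:μ₂:μ₃:μ₄), N₁ = (μ₂:μ₁:μ₄:μ₃),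 N₂ = (μ₃:μ₄:μ₁:μ₂), N₃ = (μ₄:μ₃:μ₂:μ₁) to the four coordinate points (0:0:0:1), (0:0:1:0), (0:1:0:0), (1:0:0:0) respectively. -/
/-- the linear map `T` built from the dual kappa constants sends the
four kernel nodes `N₀, N₁, N₂, N₃` of `K^Sqr` to the vertices of the coordinate
tetrahedron `(0:0:0:1), (0:0:1:0), (0:1:0:0), (1:0:0:0)` respectively. -/
theorem T_sends_nodes_to_tetrahedron {F : Type*} [Field F]
    (μ1 μ2 μ3 μ4 μh1 μh2 μh3 μh4 : F)
    (hμh1 : μh1 = (μ1 + μ2 + μ3 + μ4) / 2)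
    (hμh2 : μh2 = (μ1 + μ2 - μ3 - μ4) / 2)
    (hμh3 : μh3 = (μ1 - μ2 + μ3 - μ4) / 2)
    (hμh4 : μh4 = (μ1 - μ2 - μ3 + μ4) / 2)
    (hne : μh1 * μh2 * μh3 * μh4 ≠ 0)
    (εh1 εh2 εh3 εh4 κh1 κh2 κh3 κh4 : F)
    (heh1 : εh1 = μh2 * μh3 * μh4) (heh2 : εh2 = μh1 * μh3 * μh4)
    (heh3 : εh3 = μh1 * μh2 * μh4) (heh4 : εh4 = μh1 * μh2 * μh3)
    (hκh1 : κh1 = εh1 + εh2 + εh3 + εh4) (hκh2 : κh2 = εh1 + εh2 - εh3 - εh4)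
    (hκh3 : κh3 = εh1 - εh2 + εh3 - εh4) (hκh4 : κh4 = εh1 - εh2 - εh3 + εh4)
    (T : F → F → F → F → F × F × F × F)
    (hT : ∀ X1 X2 X3 X4, T X1 X2 X3 X4 =
      (κh4 * X1 + κh3 * X2 + κh2 * X3 + κh1 * X4,
       κh3 * X1 + κh4 * X2 + κh1 * X3 + κh2 * X4,
       κh2 * X1 + κh1 * X2 + κh4 * X3 + κh3 * X4,
       κh1 * X1 + κh2 * X2 + κh3 * X3 + κh4 * X4)) :
    (∃ lam : F, lam ≠ 0 ∧ T μ1 μ2 μ3 μ4 = (0, 0, 0, lam)) ∧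
      (∃ lam : F, lam ≠ 0 ∧ T μ2 μ1 μ4 μ3 = (0, 0, lam, 0)) ∧
      (∃ lam : F, lam ≠ 0 ∧ T μ3 μ4 μ1 μ2 = (0, lam, 0, 0)) ∧
      (∃ lam : F, lam ≠ 0 ∧ T μ4 μ3 μ2 μ1 = (lam, 0, 0, 0)) := by
  have h2 : (2:F) ≠ 0 := by
    intro h
    apply hne
    rw [hμh1, h, div_zero]
    ring
  have h8 : (8:F) ≠ 0 := by
    have h83 : (8:F) = 2^3 := by norm_num
    rw [h83]; exact pow_ne_zero 3 h2
  have ha' : μ1 + μ2 + μ3 + μ4 = 2 * μh1 := by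
    rw [hμh1]; field_simp
  have hb' : μ1 + μ2 - μ3 - μ4 = 2 * μh2 := by
    rw [hμh2]; field_simp
  have hc' : μ1 - μ2 + μ3 - μ4 = 2 * μh3 := by
    rw [hμh3]; field_simp
  have hd' : μ1 - μ2 - μ3 + μ4 = 2 * μh4 := by
    rw [hμh4]; field_simp
  have e1 : 8 * εh1 = (μ1+μ2-μ3-μ4)*((μ1-μ2+μ3-μ4)*(μ1-μ2-μ3+μ4)) := by
    rw [heh1, hb', hc', hd']; ring
  have e2 : 8 * εh2 = (μ1+μ2+μ3+μ4)*((μ1-μ2+μ3-μ4)*(μ1-μ2-μ3+μ4)) := by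
    rw [heh2, ha', hc', hd']; ring
  have e3 : 8 * εh3 = (μ1+μ2+μ3+μ4)*((μ1+μ2-μ3-μ4)*(μ1-μ2-μ3+μ4)) := by
    rw [heh3, ha', hb', hd']; ring
  have e4 : 8 * εh4 = (μ1+μ2+μ3+μ4)*((μ1+μ2-μ3-μ4)*(μ1-μ2+μ3-μ4)) := by
    rw [heh4, ha', hb', hc']; ring
  have k1 : 8 * κh1 = 8*εh1 + 8*εh2 + 8*εh3 + 8*εh4 := by rw [hκh1]; ring
  have k2 : 8 * κh2 = 8*εh1 + 8*εh2 - 8*εh3 - 8*εh4 := by rw [hκh2]; ring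
  have k3 : 8 * κh3 = 8*εh1 - 8*εh2 + 8*εh3 - 8*εh4 := by rw [hκh3]; ring
  have k4 : 8 * κh4 = 8*εh1 - 8*εh2 - 8*εh3 + 8*εh4 := by rw [hκh4]; ring
  rw [e1] at k1 k2 k3 k4
  rw [e2] at k1 k2 k3 k4
  rw [e3] at k1 k2 k3 k4
  rw [e4] at k1 k2 k3 k4
  have habcd : (μ1+μ2+μ3+μ4)*((μ1+μ2-μ3-μ4)*((μ1-μ2+μ3-μ4)*(μ1-μ2-μ3+μ4)))
      = 16 * (μh1 * μh2 * μh3 * μh4) := by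
    rw [ha', hb', hc', hd']; ring
  have hlamne : (8:F) * (μh1 * μh2 * μh3 * μh4) ≠ 0 := mul_ne_zero h8 hne
  refine ⟨⟨_, hlamne, ?_⟩, ⟨_, hlamne, ?_⟩, ⟨_, hlamne, ?_⟩, ⟨_, hlamne, ?_⟩⟩ <;>
      rw [hT, Prod.mk.injEq, Prod.mk.injEq, Prod.mk.injEq] <;>
      refine ⟨?_, ?_, ?_, ?_⟩ <;>
      apply mul_left_cancel₀ h8
  · linear_combination μ1*k4 + μ2*k3 + μ3*k2 + μ4*k1
  · linear_combination μ1*k3 + μ2*k4 + μ3*k1 + μ4*k2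
  · linear_combination μ1*k2 + μ2*k1 + μ3*k4 + μ4*k3
  · linear_combination μ1*k1 + μ2*k2 + μ3*k3 + μ4*k4 + 4*habcd
  · linear_combination μ2*k4 + μ1*k3 + μ4*k2 + μ3*k1
  · linear_combination μ2*k3 + μ1*k4 + μ4*k1 + μ3*k2
  · linear_combination μ2*k2 + μ1*k1 + μ4*k4 + μ3*k3 + 4*habcd
  · linear_combination μ2*k1 + μ1*k2 + μ4*k3 + μ3*k4
  · linear_combination μ3*k4 + μ4*k3 + μ1*k2 + μ2*k1
  · linear_combination μ3*k3 + μ4*k4 + μ1*k1 + μ2*k2 + 4*habcd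
  · linear_combination μ3*k2 + μ4*k1 + μ1*k4 + μ2*k3
  · linear_combination μ3*k1 + μ4*k2 + μ1*k3 + μ2*k4
  · linear_combination μ4*k4 + μ3*k3 + μ2*k2 + μ1*k1 + 4*habcd
  · linear_combination μ4*k3 + μ3*k4 + μ2*k1 + μ1*k2
  · linear_combination μ4*k2 + μ3*k1 + μ2*k4 + μ1*k3
  · linear_combination μ4*k1 + μ3*k2 + μ2*k3 + μ1*k4
end

section
/- On the squared Kummer surface K^Sqr the pseudo-doubling formula is an involution of two Hadamard-square steps: if ±P = (X₁:X₂:X₃:X₄) with all Xᵢ ≠ 0, and Uᵢ = ε̂ᵢ·(Hadamard(X)ᵢ)² for i = 1,…,4 (where Hadamard(X)₁ = X₁+X₂+X₃+X₄ etc.), then the point ±[2]P given by X_i^{[2]P} = εᵢ·(Hadamard(U)ᵢ)² agrees with the composition of the maps S : (T₁:T₂:T₃:T₄) ↦ (T₁²:T₂²:T₃²:T₄²), the Hadamard transform H, the dual scaling by (1/α̂₁,…,1/α̂₄), the dual squaring, the dual Hadamard transform, and the scaling by (1/α₁,…,1/α₄), applied around the full hexagon starting and ending at K^Sqr. -/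
set_option maxHeartbeats 2000000


/-- pseudo-doubling on the squared Kummer surface `K^Sqr` agrees
(projectively) with the composition of the six maps around the full hexagon
(Hadamard `H`, dual scaling `Ĉ`, dual squaring `Ŝ`, dual Hadamard `Ĥ`, scaling `C`,
squaring `S`) starting and ending at `K^Sqr`. -/
theorem pseudo_doubling_hexagon {F : Type*} [Field F]
    (a1 a2 a3 a4 ah1 ah2 ah3 ah4 : F)
    (ha1 : a1 ≠ 0) (ha2 : a2 ≠ 0) (ha3 : a3 ≠ 0) (ha4 : a4 ≠ 0)
    (hah1 : ah1 ≠ 0) (hah2 : ah2 ≠ 0) (hah3 : ah3 ≠ 0) (hah4 : ah4 ≠ 0)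
    (μ1 μ2 μ3 μ4 μh1 μh2 μh3 μh4 : F)
    (hμ1 : μ1 = a1 ^ 2) (hμ2 : μ2 = a2 ^ 2) (hμ3 : μ3 = a3 ^ 2) (hμ4 : μ4 = a4 ^ 2)
    (hμh1 : μh1 = ah1 ^ 2) (hμh2 : μh2 = ah2 ^ 2) (hμh3 : μh3 = ah3 ^ 2)
    (hμh4 : μh4 = ah4 ^ 2)
    (hH1 : μh1 = (μ1 + μ2 + μ3 + μ4) / 2) (hH2 : μh2 = (μ1 + μ2 - μ3 - μ4) / 2)
    (hH3 : μh3 = (μ1 - μ2 + μ3 - μ4) / 2) (hH4 : μh4 = (μ1 - μ2 - μ3 + μ4) / 2)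
    (ε1 ε2 ε3 ε4 εh1 εh2 εh3 εh4 : F)
    (he1 : ε1 = μ2 * μ3 * μ4) (he2 : ε2 = μ1 * μ3 * μ4)
    (he3 : ε3 = μ1 * μ2 * μ4) (he4 : ε4 = μ1 * μ2 * μ3)
    (heh1 : εh1 = μh2 * μh3 * μh4) (heh2 : εh2 = μh1 * μh3 * μh4)
    (heh3 : εh3 = μh1 * μh2 * μh4) (heh4 : εh4 = μh1 * μh2 * μh3)
    (X1 X2 X3 X4 : F)
    (hX1 : X1 ≠ 0) (hX2 : X2 ≠ 0) (hX3 : X3 ≠ 0) (hX4 : X4 ≠ 0)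
    -- the pseudo-doubling of Equations (1)–(4):
    (U1 U2 U3 U4 D1 D2 D3 D4 : F)
    (hU1 : U1 = εh1 * (X1 + X2 + X3 + X4) ^ 2)
    (hU2 : U2 = εh2 * (X1 + X2 - X3 - X4) ^ 2)
    (hU3 : U3 = εh3 * (X1 - X2 + X3 - X4) ^ 2)
    (hU4 : U4 = εh4 * (X1 - X2 - X3 + X4) ^ 2)
    (hD1 : D1 = ε1 * (U1 + U2 + U3 + U4) ^ 2)
    (hD2 : D2 = ε2 * (U1 + U2 - U3 - U4) ^ 2)
    (hD3 : D3 = ε3 * (U1 - U2 + U3 - U4) ^ 2)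
    (hD4 : D4 = ε4 * (U1 - U2 - U3 + U4) ^ 2)
    -- the hexagon, starting at K^Sqr: H, then Ĉ, then Ŝ, then Ĥ, then C, then S:
    (Y1 Y2 Y3 Y4 Yd1 Yd2 Yd3 Yd4 Xh1 Xh2 Xh3 Xh4
      Yh1 Yh2 Yh3 Yh4 T1 T2 T3 T4 hex1 hex2 hex3 hex4 : F)
    (hY1 : Y1 = X1 + X2 + X3 + X4) (hY2 : Y2 = X1 + X2 - X3 - X4)
    (hY3 : Y3 = X1 - X2 + X3 - X4) (hY4 : Y4 = X1 - X2 - X3 + X4)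
    (hYd1 : Yd1 = Y1 / ah1) (hYd2 : Yd2 = Y2 / ah2)
    (hYd3 : Yd3 = Y3 / ah3) (hYd4 : Yd4 = Y4 / ah4)
    (hXh1 : Xh1 = Yd1 ^ 2) (hXh2 : Xh2 = Yd2 ^ 2)
    (hXh3 : Xh3 = Yd3 ^ 2) (hXh4 : Xh4 = Yd4 ^ 2)
    (hYh1 : Yh1 = Xh1 + Xh2 + Xh3 + Xh4) (hYh2 : Yh2 = Xh1 + Xh2 - Xh3 - Xh4)
    (hYh3 : Yh3 = Xh1 - Xh2 + Xh3 - Xh4) (hYh4 : Yh4 = Xh1 - Xh2 - Xh3 + Xh4)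
    (hT1 : T1 = Yh1 / a1) (hT2 : T2 = Yh2 / a2)
    (hT3 : T3 = Yh3 / a3) (hT4 : T4 = Yh4 / a4)
    (hhex1 : hex1 = T1 ^ 2) (hhex2 : hex2 = T2 ^ 2)
    (hhex3 : hex3 = T3 ^ 2) (hhex4 : hex4 = T4 ^ 2) :
    ∃ lam : F, lam ≠ 0 ∧
      D1 = lam * hex1 ∧ D2 = lam * hex2 ∧ D3 = lam * hex3 ∧ D4 = lam * hex4 := by
  have hu1 : U1 = (ah1*ah2*ah3*ah4)^2 * Xh1 := by
    simp only [hU1, heh1, hXh1, hYd1, hY1, hμh1, hμh2, hμh3, hμh4]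
    field_simp
  have hu2 : U2 = (ah1*ah2*ah3*ah4)^2 * Xh2 := by
    simp only [hU2, heh2, hXh2, hYd2, hY2, hμh1, hμh2, hμh3, hμh4]
    field_simp
  have hu3 : U3 = (ah1*ah2*ah3*ah4)^2 * Xh3 := by
    simp only [hU3, heh3, hXh3, hYd3, hY3, hμh1, hμh2, hμh3, hμh4]
    field_simp
  have hu4 : U4 = (ah1*ah2*ah3*ah4)^2 * Xh4 := by
    simp only [hU4, heh4, hXh4, hYd4, hY4, hμh1, hμh2, hμh3, hμh4]
    field_simp
  refine ⟨(a1*a2*a3*a4)^2*(ah1*ah2*ah3*ah4)^4, ?_, ?_, ?_, ?_, ?_⟩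
  · exact mul_ne_zero (pow_ne_zero _ (by simp [ha1, ha2, ha3, ha4]))
      (pow_ne_zero _ (by simp [hah1, hah2, hah3, hah4]))
  · simp only [hD1, hu1, hu2, hu3, hu4, he1, hμ2, hμ3, hμ4, hhex1, hT1, hYh1]
    field_simp
  · simp only [hD2, hu1, hu2, hu3, hu4, he2, hμ1, hμ3, hμ4, hhex2, hT2, hYh2]
    field_simp
  · simp only [hD3, hu1, hu2, hu3, hu4, he3, hμ1, hμ2, hμ4, hhex3, hT3, hYh3]
    field_simp
  · simp only [hD4, hu1, hu2, hu3, hu4, he4, hμ1, hμ2, hμ3, hhex4, hT4, hYh4]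
    field_simp
end

section
/- Let B̂^Can_ij be the canonical biquadratic forms on the dual canonical Kummer surface K̂^Can, given (for i ≠ j, {i,j,k,l} = {1,2,3,4}) by B̂^Can_ij = 2/(μᵢμⱼ−μₖμₗ) · (α̂ᵢα̂ⱼ(TᵢᴾTⱼᴾTᵢ^Q Tⱼ^Q + TₖᴾTₗᴾTₖ^Q Tₗ^Q) − α̂ₖα̂ₗ(TᵢᴾTⱼᴾTₖ^Q Tₗ^Q + TₖᴾTₗᴾTᵢ^Q Tⱼ^Q)). Then their pullbacks along the dual scaling map Ĉ : Yᵢ ↦ Yᵢ/α̂ᵢ to the intermediate surface K^Int are, up to a common nonzero projective factor, B^Int_ij = C·C_ij·(μ̂ₖμ̂ₗ(Y_{ij}^P − Y_{kl}^P)(Y_{ij}^Q − Y_{kl}^Q) + (μ̂ᵢμ̂ⱼ − μ̂ₖμ̂ₗ)Y_{kl}^P Y_{kl}^Q), where Y_{ij}^P = Yᵢ^P Yⱼ^P, C_ij = μ̂ᵢμ̂ⱼ(μ̂ᵢμ̂ₖ−μ̂ⱼμ̂ₗ)(μ̂ᵢμ̂ₗ−μ̂ⱼμ̂ₖ), and C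 = 8μ₁μ₂μ₃μ₄μ̂₁μ̂₂μ̂₃μ̂₄/((μ̂₁μ̂₂−μ̂₃μ̂₄)(μ̂₁μ̂₃−μ̂₂μ̂₄)(μ̂₁μ̂₄−μ̂₂μ̂₃)); in particular the B^Int_ij are polynomial expressions in the squared constants μ̂ᵢ only, involving no unsquared α̂ᵢ. -/
lemma key_offdiag {F : Type*} [Field F]
    {ai aj ak al pi pj pk pl qi qj qk ql lam C M mi mj mk ml : F}
    (hai : ai ≠ 0) (haj : aj ≠ 0) (hak : ak ≠ 0) (hal : al ≠ 0)
    (hM : M ≠ 0)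
    (hmi : mi = ai ^ 2) (hmj : mj = aj ^ 2) (hmk : mk = ak ^ 2) (hml : ml = al ^ 2)
    (hscal : lam * C * (mi * mj * (mi * mk - mj * ml) * (mi * ml - mj * mk))
        * (M * (mk * ml)) = 2) :
    ai * aj *
      (2 / M *
        (ai * aj *
            ((pi / ai) * (pj / aj) * (qi / ai) * (qj / aj)
              + (pk / ak) * (pl / al) * (qk / ak) * (ql / al))
          - ak * al *
            ((pi / ai) * (pj / aj) * (qk / ak) * (ql / al)
              + (pk / ak) * (pl / al) * (qi / ai) * (qj / aj)))) =
    lam * (C * (mi * mj * (mi * mk - mj * ml) * (mi * ml - mj * mk)) *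
      (mk * ml * ((pi * pj - pk * pl) * (qi * qj - qk * ql))
        + (mi * mj - mk * ml) * (pk * pl) * (qk * ql))) := by
  subst hmi hmj hmk hml
  have hkl : (ak ^ 2 * al ^ 2 : F) ≠ 0 :=
    mul_ne_zero (pow_ne_zero _ hak) (pow_ne_zero _ hal)
  have hMkl : M * (ak ^ 2 * al ^ 2) ≠ 0 := mul_ne_zero hM hkl
  have hS : lam * C * (ai ^ 2 * aj ^ 2 * (ai ^ 2 * ak ^ 2 - aj ^ 2 * al ^ 2)
      * (ai ^ 2 * al ^ 2 - aj ^ 2 * ak ^ 2)) = 2 / (M * (ak ^ 2 * al ^ 2)) := by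
    rw [eq_div_iff hMkl]; linear_combination hscal
  have h1 : ai * aj *
      (2 / M *
        (ai * aj *
            ((pi / ai) * (pj / aj) * (qi / ai) * (qj / aj)
              + (pk / ak) * (pl / al) * (qk / ak) * (ql / al))
          - ak * al *
            ((pi / ai) * (pj / aj) * (qk / ak) * (ql / al)
              + (pk / ak) * (pl / al) * (qi / ai) * (qj / aj)))) =
      2 / (M * (ak ^ 2 * al ^ 2)) *
        (ak ^ 2 * al ^ 2 * ((pi * pj - pk * pl) * (qi * qj - qk * ql))
          + (ai ^ 2 * aj ^ 2 - ak ^ 2 * al ^ 2) * (pk * pl) * (qk * ql)) := by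
    obtain ⟨Pi, rfl⟩ : ∃ x, pi = ai * x := ⟨pi / ai, by field_simp⟩
    obtain ⟨Pj, rfl⟩ : ∃ x, pj = aj * x := ⟨pj / aj, by field_simp⟩
    obtain ⟨Pk, rfl⟩ : ∃ x, pk = ak * x := ⟨pk / ak, by field_simp⟩
    obtain ⟨Pl, rfl⟩ : ∃ x, pl = al * x := ⟨pl / al, by field_simp⟩
    obtain ⟨Qi, rfl⟩ : ∃ x, qi = ai * x := ⟨qi / ai, by field_simp⟩
    obtain ⟨Qj, rfl⟩ : ∃ x, qj = aj * x := ⟨qj / aj, by field_simp⟩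
    obtain ⟨Qk, rfl⟩ : ∃ x, qk = ak * x := ⟨qk / ak, by field_simp⟩
    obtain ⟨Ql, rfl⟩ : ∃ x, ql = al * x := ⟨ql / al, by field_simp⟩
    simp only [mul_div_cancel_left₀ _ hai, mul_div_cancel_left₀ _ haj,
      mul_div_cancel_left₀ _ hak, mul_div_cancel_left₀ _ hal]
    rw [div_mul_eq_mul_div, div_mul_eq_mul_div, mul_div_assoc',
      div_eq_div_iff hM hMkl]
    ring
  rw [h1, ← hS]
  ring


set_option maxHeartbeats 2000000 in
/-- off-diagonal part of Theorem 1: the pullbacks of the canonical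
biquadratic forms `B̂^Can_ij` (`i ≠ j`) along the dual scaling `Yᵢ ↦ Yᵢ/α̂ᵢ` equal, up
to a common nonzero projective factor, the forms
`B^Int_ij = C·C_ij·(μ̂ₖμ̂ₗ(Y_ij^P − Y_kl^P)(Y_ij^Q − Y_kl^Q) + (μ̂ᵢμ̂ⱼ − μ̂ₖμ̂ₗ)Y_kl^P Y_kl^Q)`,
which involve only the squared constants `μ̂ᵢ`. -/
theorem intermediate_offdiagonal_forms {F : Type*} [Field F]
    (μ μh ah : Fin 4 → F)
    (hμh : ∀ i, μh i = ah i ^ 2)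
    (hah : ∀ i, ah i ≠ 0)
    (hH0 : μh 0 = (μ 0 + μ 1 + μ 2 + μ 3) / 2)
    (hH1 : μh 1 = (μ 0 + μ 1 - μ 2 - μ 3) / 2)
    (hH2 : μh 2 = (μ 0 - μ 1 + μ 2 - μ 3) / 2)
    (hH3 : μh 3 = (μ 0 - μ 1 - μ 2 + μ 3) / 2)
    (hμne : ∀ i, μ i ≠ 0) (hμhne : ∀ i, μh i ≠ 0)
    (hdiff : ∀ i j k l : Fin 4, ({i, j, k, l} : Finset (Fin 4)) = Finset.univ →
      μ i * μ j - μ k * μ l ≠ 0)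
    (hdiffh : ∀ i j k l : Fin 4, ({i, j, k, l} : Finset (Fin 4)) = Finset.univ →
      μh i * μh j - μh k * μh l ≠ 0)
    (C : F)
    (hC : C = 8 * (μ 0 * μ 1 * μ 2 * μ 3) * (μh 0 * μh 1 * μh 2 * μh 3) /
      ((μh 0 * μh 1 - μh 2 * μh 3) * (μh 0 * μh 2 - μh 1 * μh 3)
        * (μh 0 * μh 3 - μh 1 * μh 2)))
    (yP yQ : Fin 4 → F) :
    ∃ lam : F, lam ≠ 0 ∧
      ∀ i j k l : Fin 4, ({i, j, k, l} : Finset (Fin 4)) = Finset.univ →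
        -- pullback along `Ĉ : Yᵢ ↦ Yᵢ/α̂ᵢ` of the canonical form `B̂^Can_ij`:
        ah i * ah j *
          (2 / (μ i * μ j - μ k * μ l) *
            (ah i * ah j *
                ((yP i / ah i) * (yP j / ah j) * (yQ i / ah i) * (yQ j / ah j)
                  + (yP k / ah k) * (yP l / ah l) * (yQ k / ah k) * (yQ l / ah l))
              - ah k * ah l *
                ((yP i / ah i) * (yP j / ah j) * (yQ k / ah k) * (yQ l / ah l)
                  + (yP k / ah k) * (yP l / ah l) * (yQ i / ah i) * (yQ j / ah j)))) =
        lam * (C * (μh i * μh j * (μh i * μh k - μh j * μh l) * (μh i * μh l - μh j * μh k)) *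
          (μh k * μh l * ((yP i * yP j - yP k * yP l) * (yQ i * yQ j - yQ k * yQ l))
            + (μh i * μh j - μh k * μh l) * (yP k * yP l) * (yQ k * yQ l))) := by
  have h2 : (2 : F) ≠ 0 := by
    intro h
    apply hμhne 0
    rw [hH0, h, div_zero]
  have h4 : (4 : F) ≠ 0 := by
    rw [show (4 : F) = 2 * 2 by norm_num]
    exact mul_ne_zero h2 h2
  have hP : (μ 0 * μ 1 * μ 2 * μ 3 : F) ≠ 0 :=
    mul_ne_zero (mul_ne_zero (mul_ne_zero (hμne 0) (hμne 1)) (hμne 2)) (hμne 3)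
  have hQ : (μh 0 * μh 1 * μh 2 * μh 3 : F) ≠ 0 :=
    mul_ne_zero (mul_ne_zero (mul_ne_zero (hμhne 0) (hμhne 1)) (hμhne 2)) (hμhne 3)
  have hd1 : μh 0 * μh 1 - μh 2 * μh 3 ≠ 0 := hdiffh 0 1 2 3 (by decide)
  have hd2 : μh 0 * μh 2 - μh 1 * μh 3 ≠ 0 := hdiffh 0 2 1 3 (by decide)
  have hd3 : μh 0 * μh 3 - μh 1 * μh 2 ≠ 0 := hdiffh 0 3 1 2 (by decide)
  have hΔ : (μh 0 * μh 1 - μh 2 * μh 3) * (μh 0 * μh 2 - μh 1 * μh 3)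
      * (μh 0 * μh 3 - μh 1 * μh 2) ≠ 0 := mul_ne_zero (mul_ne_zero hd1 hd2) hd3
  have hCval : C * ((μh 0 * μh 1 - μh 2 * μh 3) * (μh 0 * μh 2 - μh 1 * μh 3)
      * (μh 0 * μh 3 - μh 1 * μh 2))
      = 8 * (μ 0 * μ 1 * μ 2 * μ 3) * (μh 0 * μh 1 * μh 2 * μh 3) := by
    rw [hC, div_mul_cancel₀ _ hΔ]
  have h4PQ : (4 * (μ 0 * μ 1 * μ 2 * μ 3) * (μh 0 * μh 1 * μh 2 * μh 3) ^ 2 : F) ≠ 0 :=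
    mul_ne_zero (mul_ne_zero h4 hP) (pow_ne_zero _ hQ)
  set L : F := (4 * (μ 0 * μ 1 * μ 2 * μ 3) * (μh 0 * μh 1 * μh 2 * μh 3) ^ 2)⁻¹ with hL
  have hLne : L ≠ 0 := inv_ne_zero h4PQ
  have hLval : L * (4 * (μ 0 * μ 1 * μ 2 * μ 3) * (μh 0 * μh 1 * μh 2 * μh 3) ^ 2) = 1 :=
    inv_mul_cancel₀ h4PQ
  have hMeq1 : μ 0 * μ 1 - μ 2 * μ 3 = μh 0 * μh 1 - μh 2 * μh 3 := by
    rw [hH0, hH1, hH2, hH3]; field_simp; ring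
  have hMeq2 : μ 0 * μ 2 - μ 1 * μ 3 = μh 0 * μh 2 - μh 1 * μh 3 := by
    rw [hH0, hH1, hH2, hH3]; field_simp; ring
  have hMeq3 : μ 0 * μ 3 - μ 1 * μ 2 = μh 0 * μh 3 - μh 1 * μh 2 := by
    rw [hH0, hH1, hH2, hH3]; field_simp; ring
  have S01 : L * C * (μh 0 * μh 1 * (μh 0 * μh 2 - μh 1 * μh 3) * (μh 0 * μh 3 - μh 1 * μh 2))
      * ((μ 0 * μ 1 - μ 2 * μ 3) * (μh 2 * μh 3)) = 2 := by
    rw [hMeq1]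
    linear_combination (L * (μh 0 * μh 1 * μh 2 * μh 3)) * hCval + 2 * hLval
  have S02 : L * C * (μh 0 * μh 2 * (μh 0 * μh 1 - μh 2 * μh 3) * (μh 0 * μh 3 - μh 2 * μh 1))
      * ((μ 0 * μ 2 - μ 1 * μ 3) * (μh 1 * μh 3)) = 2 := by
    rw [hMeq2]
    linear_combination (L * (μh 0 * μh 1 * μh 2 * μh 3)) * hCval + 2 * hLval
  have S03 : L * C * (μh 0 * μh 3 * (μh 0 * μh 1 - μh 3 * μh 2) * (μh 0 * μh 2 - μh 3 * μh 1))
      * ((μ 0 * μ 3 - μ 1 * μ 2) * (μh 1 * μh 2)) = 2 := by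
    rw [hMeq3]
    linear_combination (L * (μh 0 * μh 1 * μh 2 * μh 3)) * hCval + 2 * hLval
  refine ⟨L, hLne, ?_⟩
  intro i j k l hset
  have hcases : ∀ m : Fin 4, m = 0 ∨ m = 1 ∨ m = 2 ∨ m = 3 := by decide
  rcases hcases i with rfl | rfl | rfl | rfl <;>
    rcases hcases j with rfl | rfl | rfl | rfl <;>
    rcases hcases k with rfl | rfl | rfl | rfl <;>
    rcases hcases l with rfl | rfl | rfl | rfl <;>
    first
      | exact absurd hset (by decide)
      | exact key_offdiag (hah _) (hah _) (hah _) (hah _) (hdiff _ _ _ _ hset)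
          (hμh _) (hμh _) (hμh _) (hμh _)
          (by first
            | linear_combination S01
            | linear_combination S02
            | linear_combination S03)
end

section
/- With notation as in Theorem 1 of the paper, the on-diagonal biquadratic forms on the intermediate Kummer surface K^Int are, up to a common projective factor: B^Int_11 = μ̂₁(κ₁F₁+κ₂F₂+κ₃F₃+κ₄F₄), B^Int_22 = μ̂₂(κ₂F₁+κ₁F₂+κ₄F₃+κ₃F₄), B^Int_33 = μ̂₃(κ₃F₁+κ₄F₂+κ₁F₃+κ₂F₄), B^Int_44 = μ̂₄(κ₄F₁+κ₃F₂+κ₂F₃+κ₁F₄), where F₁ = P₁Q₁+P₂Q₂+P₃Q₃+P₄Q₄, F₂ = P₁Q₂+P₂Q₁+P₃Q₄+P₄Q₃, F₃ = P₁Q₃+P₃Q₁+P₂Q₄+P₄Q₂, F₄ = P₁Q₄+P₄Q₁+P₂Q₃+P₃Q₂, with Pᵢ = ε̂ᵢ(Yᵢ^P)² and Qᵢ = ε̂ᵢ(Yᵢ^Q)². These equal the pullbacks, along the dual scaling Yᵢ ↦ Yᵢ/α̂ᵢ, of the canonical on-diagonal forms B̂^Can_ii on K̂^Can multiplied by the common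 factor 4μ₁μ₂μ₃μ₄(μ̂₁μ̂₂μ̂₃μ̂₄)². -/
set_option maxHeartbeats 2000000


/-- on-diagonal part of Theorem 1: the forms
`B^Int_ii = μ̂ᵢ(κ·F combinations)` equal the pullbacks, along the dual scaling
`Yᵢ ↦ Yᵢ/α̂ᵢ`, of the canonical on-diagonal forms `B̂^Can_ii`, multiplied by the
common factor `4μ₁μ₂μ₃μ₄(μ̂₁μ̂₂μ̂₃μ̂₄)²`. -/
theorem intermediate_ondiagonal_forms {F : Type*} [Field F]
    (μ1 μ2 μ3 μ4 μh1 μh2 μh3 μh4 ah1 ah2 ah3 ah4 : F)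
    (hμh1 : μh1 = ah1 ^ 2) (hμh2 : μh2 = ah2 ^ 2)
    (hμh3 : μh3 = ah3 ^ 2) (hμh4 : μh4 = ah4 ^ 2)
    (hah1 : ah1 ≠ 0) (hah2 : ah2 ≠ 0) (hah3 : ah3 ≠ 0) (hah4 : ah4 ≠ 0)
    (hμ1 : μ1 ≠ 0) (hμ2 : μ2 ≠ 0) (hμ3 : μ3 ≠ 0) (hμ4 : μ4 ≠ 0)
    (hH1 : μh1 = (μ1 + μ2 + μ3 + μ4) / 2) (hH2 : μh2 = (μ1 + μ2 - μ3 - μ4) / 2)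
    (hH3 : μh3 = (μ1 - μ2 + μ3 - μ4) / 2) (hH4 : μh4 = (μ1 - μ2 - μ3 + μ4) / 2)
    (ε1 ε2 ε3 ε4 εh1 εh2 εh3 εh4 κ1 κ2 κ3 κ4 : F)
    (he1 : ε1 = μ2 * μ3 * μ4) (he2 : ε2 = μ1 * μ3 * μ4)
    (he3 : ε3 = μ1 * μ2 * μ4) (he4 : ε4 = μ1 * μ2 * μ3)
    (heh1 : εh1 = μh2 * μh3 * μh4) (heh2 : εh2 = μh1 * μh3 * μh4)
    (heh3 : εh3 = μh1 * μh2 * μh4) (heh4 : εh4 = μh1 * μh2 * μh3)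
    (hκ1 : κ1 = ε1 + ε2 + ε3 + ε4) (hκ2 : κ2 = ε1 + ε2 - ε3 - ε4)
    (hκ3 : κ3 = ε1 - ε2 + ε3 - ε4) (hκ4 : κ4 = ε1 - ε2 - ε3 + ε4)
    (yP1 yP2 yP3 yP4 yQ1 yQ2 yQ3 yQ4 : F)
    (P1 P2 P3 P4 Q1 Q2 Q3 Q4 F1 F2 F3 F4 : F)
    (hP1 : P1 = εh1 * yP1 ^ 2) (hP2 : P2 = εh2 * yP2 ^ 2)
    (hP3 : P3 = εh3 * yP3 ^ 2) (hP4 : P4 = εh4 * yP4 ^ 2)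
    (hQ1 : Q1 = εh1 * yQ1 ^ 2) (hQ2 : Q2 = εh2 * yQ2 ^ 2)
    (hQ3 : Q3 = εh3 * yQ3 ^ 2) (hQ4 : Q4 = εh4 * yQ4 ^ 2)
    (hF1 : F1 = P1 * Q1 + P2 * Q2 + P3 * Q3 + P4 * Q4)
    (hF2 : F2 = P1 * Q2 + P2 * Q1 + P3 * Q4 + P4 * Q3)
    (hF3 : F3 = P1 * Q3 + P3 * Q1 + P2 * Q4 + P4 * Q2)
    (hF4 : F4 = P1 * Q4 + P4 * Q1 + P2 * Q3 + P3 * Q2)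
    -- the T-coordinates obtained by pulling back along `Yᵢ ↦ Yᵢ/α̂ᵢ`:
    (TP1 TP2 TP3 TP4 TQ1 TQ2 TQ3 TQ4 V1 V2 V3 V4 B11 B22 B33 B44 : F)
    (hTP1 : TP1 = yP1 / ah1) (hTP2 : TP2 = yP2 / ah2)
    (hTP3 : TP3 = yP3 / ah3) (hTP4 : TP4 = yP4 / ah4)
    (hTQ1 : TQ1 = yQ1 / ah1) (hTQ2 : TQ2 = yQ2 / ah2)
    (hTQ3 : TQ3 = yQ3 / ah3) (hTQ4 : TQ4 = yQ4 / ah4)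
    (hV1 : V1 = (TP1 ^ 2 + TP2 ^ 2 + TP3 ^ 2 + TP4 ^ 2)
      * (TQ1 ^ 2 + TQ2 ^ 2 + TQ3 ^ 2 + TQ4 ^ 2))
    (hV2 : V2 = (TP1 ^ 2 + TP2 ^ 2 - TP3 ^ 2 - TP4 ^ 2)
      * (TQ1 ^ 2 + TQ2 ^ 2 - TQ3 ^ 2 - TQ4 ^ 2))
    (hV3 : V3 = (TP1 ^ 2 - TP2 ^ 2 + TP3 ^ 2 - TP4 ^ 2)
      * (TQ1 ^ 2 - TQ2 ^ 2 + TQ3 ^ 2 - TQ4 ^ 2))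
    (hV4 : V4 = (TP1 ^ 2 - TP2 ^ 2 - TP3 ^ 2 + TP4 ^ 2)
      * (TQ1 ^ 2 - TQ2 ^ 2 - TQ3 ^ 2 + TQ4 ^ 2))
    -- the dual canonical on-diagonal forms `B̂^Can_ii`, evaluated on the pullbacks:
    (hB11 : B11 = (V1 / μ1 + V2 / μ2 + V3 / μ3 + V4 / μ4) / 4)
    (hB22 : B22 = (V1 / μ1 + V2 / μ2 - V3 / μ3 - V4 / μ4) / 4)
    (hB33 : B33 = (V1 / μ1 - V2 / μ2 + V3 / μ3 - V4 / μ4) / 4)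
    (hB44 : B44 = (V1 / μ1 - V2 / μ2 - V3 / μ3 + V4 / μ4) / 4) :
    μh1 * (κ1 * F1 + κ2 * F2 + κ3 * F3 + κ4 * F4) =
        4 * (μ1 * μ2 * μ3 * μ4) * (μh1 * μh2 * μh3 * μh4) ^ 2 * (ah1 * ah1 * B11) ∧
      μh2 * (κ2 * F1 + κ1 * F2 + κ4 * F3 + κ3 * F4) =
        4 * (μ1 * μ2 * μ3 * μ4) * (μh1 * μh2 * μh3 * μh4) ^ 2 * (ah2 * ah2 * B22) ∧
      μh3 * (κ3 * F1 + κ4 * F2 + κ1 * F3 + κ2 * F4) =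
        4 * (μ1 * μ2 * μ3 * μ4) * (μh1 * μh2 * μh3 * μh4) ^ 2 * (ah3 * ah3 * B33) ∧
      μh4 * (κ4 * F1 + κ3 * F2 + κ2 * F3 + κ1 * F4) =
        4 * (μ1 * μ2 * μ3 * μ4) * (μh1 * μh2 * μh3 * μh4) ^ 2 * (ah4 * ah4 * B44) := by
  have hμh1' : μh1 ≠ 0 := hμh1 ▸ pow_ne_zero 2 hah1
  have hμh2' : μh2 ≠ 0 := hμh2 ▸ pow_ne_zero 2 hah2
  have hμh3' : μh3 ≠ 0 := hμh3 ▸ pow_ne_zero 2 hah3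
  have hμh4' : μh4 ≠ 0 := hμh4 ▸ pow_ne_zero 2 hah4
  have h2 : (2:F) ≠ 0 := fun h => hμh1' (by rw [hH1, h, div_zero])
  have h4 : (4:F) ≠ 0 := by
    have : (4:F) = 2 * 2 := by norm_num
    rw [this]; exact mul_ne_zero h2 h2
  have hD2 : 4*(μ1*μ2*μ3*μ4) ≠ 0 := by simp [hμ1, hμ2, hμ3, hμ4, h4]
  have hB11' : μ2*μ3*μ4*V1 + μ1*μ3*μ4*V2 + μ1*μ2*μ4*V3 + μ1*μ2*μ3*V4
      = 4*(μ1*μ2*μ3*μ4)*B11 := by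
    have hcomb : (V1/μ1 + V2/μ2 + V3/μ3 + V4/μ4)/4
        = (μ2*μ3*μ4*V1 + μ1*μ3*μ4*V2 + μ1*μ2*μ4*V3 + μ1*μ2*μ3*V4)/(4*(μ1*μ2*μ3*μ4)) := by
      rw [div_eq_div_iff h4 hD2]
      field_simp
    rw [hB11, hcomb, ← mul_div_assoc, mul_div_cancel_left₀ _ hD2]
  have hB22' : μ2*μ3*μ4*V1 + μ1*μ3*μ4*V2 - μ1*μ2*μ4*V3 - μ1*μ2*μ3*V4
      = 4*(μ1*μ2*μ3*μ4)*B22 := by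
    have hcomb : (V1/μ1 + V2/μ2 - V3/μ3 - V4/μ4)/4
        = (μ2*μ3*μ4*V1 + μ1*μ3*μ4*V2 - μ1*μ2*μ4*V3 - μ1*μ2*μ3*V4)/(4*(μ1*μ2*μ3*μ4)) := by
      rw [div_eq_div_iff h4 hD2]
      field_simp
    rw [hB22, hcomb, ← mul_div_assoc, mul_div_cancel_left₀ _ hD2]
  have hB33' : μ2*μ3*μ4*V1 - μ1*μ3*μ4*V2 + μ1*μ2*μ4*V3 - μ1*μ2*μ3*V4
      = 4*(μ1*μ2*μ3*μ4)*B33 := by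
    have hcomb : (V1/μ1 - V2/μ2 + V3/μ3 - V4/μ4)/4
        = (μ2*μ3*μ4*V1 - μ1*μ3*μ4*V2 + μ1*μ2*μ4*V3 - μ1*μ2*μ3*V4)/(4*(μ1*μ2*μ3*μ4)) := by
      rw [div_eq_div_iff h4 hD2]
      field_simp
    rw [hB33, hcomb, ← mul_div_assoc, mul_div_cancel_left₀ _ hD2]
  have hB44' : μ2*μ3*μ4*V1 - μ1*μ3*μ4*V2 - μ1*μ2*μ4*V3 + μ1*μ2*μ3*V4
      = 4*(μ1*μ2*μ3*μ4)*B44 := by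
    have hcomb : (V1/μ1 - V2/μ2 - V3/μ3 + V4/μ4)/4
        = (μ2*μ3*μ4*V1 - μ1*μ3*μ4*V2 - μ1*μ2*μ4*V3 + μ1*μ2*μ3*V4)/(4*(μ1*μ2*μ3*μ4)) := by
      rw [div_eq_div_iff h4 hD2]
      field_simp
    rw [hB44, hcomb, ← mul_div_assoc, mul_div_cancel_left₀ _ hD2]
  clear hB11 hB22 hB33 hB44
  subst hV1 hV2 hV3 hV4 hTP1 hTP2 hTP3 hTP4 hTQ1 hTQ2 hTQ3 hTQ4
  subst hF1 hF2 hF3 hF4 hP1 hP2 hP3 hP4 hQ1 hQ2 hQ3 hQ4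
  subst hκ1 hκ2 hκ3 hκ4 he1 he2 he3 he4 heh1 heh2 heh3 heh4
  have e1 : ah1 * ah1 = μh1 := by rw [hμh1]; ring
  have e2 : ah2 * ah2 = μh2 := by rw [hμh2]; ring
  have e3 : ah3 * ah3 = μh3 := by rw [hμh3]; ring
  have e4 : ah4 * ah4 = μh4 := by rw [hμh4]; ring
  have jP1 : yP1 ^ 2 = μh1 * (yP1 / ah1) ^ 2 := by rw [hμh1, div_pow]; field_simp
  have jP2 : yP2 ^ 2 = μh2 * (yP2 / ah2) ^ 2 := by rw [hμh2, div_pow]; field_simp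
  have jP3 : yP3 ^ 2 = μh3 * (yP3 / ah3) ^ 2 := by rw [hμh3, div_pow]; field_simp
  have jP4 : yP4 ^ 2 = μh4 * (yP4 / ah4) ^ 2 := by rw [hμh4, div_pow]; field_simp
  have jQ1 : yQ1 ^ 2 = μh1 * (yQ1 / ah1) ^ 2 := by rw [hμh1, div_pow]; field_simp
  have jQ2 : yQ2 ^ 2 = μh2 * (yQ2 / ah2) ^ 2 := by rw [hμh2, div_pow]; field_simp
  have jQ3 : yQ3 ^ 2 = μh3 * (yQ3 / ah3) ^ 2 := by rw [hμh3, div_pow]; field_simp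
  have jQ4 : yQ4 ^ 2 = μh4 * (yQ4 / ah4) ^ 2 := by rw [hμh4, div_pow]; field_simp
  rw [jP1, jP2, jP3, jP4, jQ1, jQ2, jQ3, jQ4, e1, e2, e3, e4]
  refine ⟨?_, ?_, ?_, ?_⟩
  · linear_combination (μh1*μh2*μh3*μh4)^2 * μh1 * hB11'
  · linear_combination (μh1*μh2*μh3*μh4)^2 * μh2 * hB22'
  · linear_combination (μh1*μh2*μh3*μh4)^2 * μh3 * hB33'
  · linear_combination (μh1*μh2*μh3*μh4)^2 * μh4 * hB44'
end
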